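/- arXiv:1611.06605 — 3 statements merged into one kernel-verified Lean document; each statement's English description precedes it below -/
import Mathlib

section
/- Let T be a finite tree and ⊑ a linear order on its vertex set V whose canonical labeling H^⊑ is ℓ1-optimal, i.e., minimizes ∑_{u ∈ V} |H_u| over all hub labelings of T. Then for every vertex u, M_u ≥ |T_u| / 6. -/
open SimpleGraph

/-- `w` lies on the unique `u`-`v` path in a tree (characterized via distances). -/
def onPath {V : Type*} (G : SimpleGraph V) (u v w : V) : Prop :=
  G.dist u w + G.dist w v = G.dist u v

/-- A hub labeling: every pair `u, v` has a common hub on the path between them. -/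
def IsHubLabeling {V : Type*} (G : SimpleGraph V) (H : V → Set V) : Prop :=
  ∀ u v : V, ∃ w : V, w ∈ H u ∧ w ∈ H v ∧ onPath G u v w

/-- A hub labeling is hierarchical if the hubs of each vertex have rank at most
the rank of the vertex, for some injective ranking `π : V → ℕ`. -/
def IsHierarchical {V : Type*} (H : V → Set V) : Prop :=
  ∃ π : V → ℕ, Function.Injective π ∧ ∀ u : V, ∀ w ∈ H u, π w ≤ π u

/-- `w` lies in the connected component of `u` of the subgraph of `G` induced on
`{x | le u x}`: there is a walk from `u` to `w` all of whose vertices `x` satisfy `le u x`. -/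
def inCompAbove {V : Type*} (G : SimpleGraph V) (le : V → V → Prop) (u w : V) : Prop :=
  ∃ p : G.Walk u w, ∀ x ∈ p.support, le u x

/-- The canonical labeling of a linear order `le`: the hub set of `w` consists of all
vertices `u` such that `w` lies in the component `T_u` of `u` above `u`. -/
def canonical {V : Type*} (G : SimpleGraph V) (le : V → V → Prop) : V → Set V :=
  fun w => {u : V | inCompAbove G le u w}
/-- The connected component of `w` in the subgraph of `G` induced on `A`. -/
def compIn {V : Type*} (G : SimpleGraph V) (A : Set V) (w : V) : Set V :=
  {x : V | ∃ p : G.Walk w x, ∀ y ∈ p.support, y ∈ A}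

/-- The maximum number of vertices in a connected component of the subgraph of `G`
induced on `A` (equal to `0` if `A` is empty). -/
noncomputable def maxCompCard {V : Type*} (G : SimpleGraph V) (A : Set V) : ℕ :=
  sSup {k : ℕ | ∃ w ∈ A, k = (compIn G A w).ncard}

/-- `M_u`: the size of `T_u` minus the maximum size of a connected component of the
subgraph induced on `T_u \ {u}`. -/
noncomputable def Msep {V : Type*} (G : SimpleGraph V) (le : V → V → Prop) (u : V) : ℕ :=
  {w : V | inCompAbove G le u w}.ncard -
    maxCompCard G ({w : V | inCompAbove G le u w} \ {u})

namespace TreeHub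

variable {V : Type*} {G : SimpleGraph V}

attribute [local instance] Classical.propDecidable

/-- The unique path between two vertices of a tree. -/
noncomputable def tPath (hT : G.IsTree) (x y : V) : G.Walk x y :=
  (hT.existsUnique_path x y).choose

lemma tPath_isPath (hT : G.IsTree) (x y : V) : (tPath hT x y).IsPath :=
  (hT.existsUnique_path x y).choose_spec.1

lemma tPath_eq (hT : G.IsTree) {x y : V} (p : G.Walk x y) (hp : p.IsPath) :
    p = tPath hT x y :=
  (hT.existsUnique_path x y).choose_spec.2 p hp

lemma tPath_length (hT : G.IsTree) (x y : V) :
    (tPath hT x y).length = G.dist x y := by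
  obtain ⟨p, hp, hl⟩ := hT.isConnected.exists_path_of_dist x y
  rw [← tPath_eq hT p hp, hl]

lemma tPath_support_subset (hT : G.IsTree) {x y : V} (W : G.Walk x y) :
    (tPath hT x y).support ⊆ W.support := by
  rw [← tPath_eq hT W.toPath.1 W.toPath.2]
  exact W.support_toPath_subset

lemma dist_triangle (hT : G.IsTree) (a b c : V) :
    G.dist a c ≤ G.dist a b + G.dist b c :=
  hT.isConnected.dist_triangle

lemma onPath_iff_mem_support (hT : G.IsTree) {x y w : V} :
    onPath G x y w ↔ w ∈ (tPath hT x y).support := by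
  constructor
  · intro h
    have h1 := tPath_length hT x w
    have h2 := tPath_length hT w y
    set p1 := tPath hT x w
    set p2 := tPath hT w y
    have hlen : (p1.append p2).length = G.dist x y := by
      rw [Walk.length_append, h1, h2]; exact h
    have hpath : (p1.append p2).IsPath :=
      Walk.isPath_of_length_eq_dist _ hlen
    rw [← tPath_eq hT _ hpath]
    rw [Walk.mem_support_append_iff]
    left; exact Walk.end_mem_support _
  · intro h
    have hsp := (tPath hT x y).take_spec h
    have hlen : (((tPath hT x y).takeUntil w h).length +
        ((tPath hT x y).dropUntil w h).length) = G.dist x y := by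
      rw [← Walk.length_append, hsp, tPath_length]
    have d1 : G.dist x w ≤ ((tPath hT x y).takeUntil w h).length := dist_le _
    have d2 : G.dist w y ≤ ((tPath hT x y).dropUntil w h).length := dist_le _
    have d3 := dist_triangle hT x w y
    unfold onPath
    omega

lemma onPath_self_left (hT : G.IsTree) (x y : V) : onPath G x y x := by
  unfold onPath; rw [G.dist_self]; omega

lemma onPath_self_right (hT : G.IsTree) (x y : V) : onPath G x y y := by
  unfold onPath; rw [G.dist_self]; omega

lemma onPath_symm {x y w : V} (h : onPath G x y w) : onPath G y x w := by
  unfold onPath at *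
  rw [dist_comm (u := y) (v := w), dist_comm (u := w) (v := x), dist_comm (u := y) (v := x)]
  omega

/-- transitivity: if `w` is on `P(a,b)` and `m` is on `P(a,w)` then `m` is on `P(a,b)`. -/
lemma onPath_trans (hT : G.IsTree) {a b w m : V}
    (h1 : onPath G a b w) (h2 : onPath G a w m) : onPath G a b m := by
  unfold onPath at *
  have t1 : G.dist m b ≤ G.dist m w + G.dist w b := dist_triangle hT m w b
  have t2 : G.dist a b ≤ G.dist a m + G.dist m b := dist_triangle hT a m b
  omega

/-- Separation: if `m` is on the path from `x` to `y`, then for any `z`, `m` is on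
the path from `x` to `z` or on the path from `y` to `z`. -/
lemma onPath_sep (hT : G.IsTree) {x y m : V} (h : onPath G x y m) (z : V) :
    onPath G x z m ∨ onPath G y z m := by
  by_contra hc
  push_neg at hc
  obtain ⟨h1, h2⟩ := hc
  have h1' : m ∉ (tPath hT x z).support := fun hm =>
    h1 ((onPath_iff_mem_support hT).2 hm)
  have h2' : m ∉ (tPath hT z y).support := fun hm =>
    h2 (onPath_symm ((onPath_iff_mem_support hT).2 hm))
  have hmem : m ∈ ((tPath hT x z).append (tPath hT z y)).support :=
    tPath_support_subset hT _ ((onPath_iff_mem_support hT).1 h)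
  rw [Walk.mem_support_append_iff] at hmem
  tauto


/-- Meet of three vertices: a vertex on all three pairwise paths. -/
lemma exists_meet (hT : G.IsTree) (u a b : V) :
    ∃ g, onPath G u a g ∧ onPath G u b g ∧ onPath G a b g := by
  classical
  -- candidates : vertices on tPath u a that are also on path u b
  set p := tPath hT u a with hp
  set S : Finset V := p.support.toFinset.filter (fun h => onPath G u b h) with hS
  have hu : u ∈ S := by
    refine Finset.mem_filter.2 ⟨List.mem_toFinset.2 (Walk.start_mem_support _), ?_⟩
    show G.dist u u + G.dist u b = G.dist u b
    rw [G.dist_self]; omega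
  obtain ⟨g, hgS, hgmax⟩ := S.exists_max_image (fun h => G.dist u h) ⟨u, hu⟩
  have hgp : g ∈ p.support := by
    have := (Finset.mem_filter.1 hgS).1; exact List.mem_toFinset.1 this
  have hgb : onPath G u b g := (Finset.mem_filter.1 hgS).2
  have hga : onPath G u a g := (onPath_iff_mem_support hT).2 hgp
  refine ⟨g, hga, hgb, ?_⟩
  -- construct path a -> g -> b and show it is a path
  set q := tPath hT u b with hq
  have hgq : g ∈ q.support := (onPath_iff_mem_support hT).1 hgb
  set p2 := p.dropUntil g hgp with hp2
  set q2 := q.dropUntil g hgq with hq2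
  have hp2path : p2.IsPath := (tPath_isPath hT u a).dropUntil hgp
  have hq2path : q2.IsPath := (tPath_isPath hT u b).dropUntil hgq
  -- any common vertex of p2 and q2 is g
  have hdisj : ∀ z, z ∈ p2.support → z ∈ q2.support → z = g := by
    intro z hzp hzq
    -- z on path g a and on path g b
    have hz1 : onPath G g a z := by
      have he := tPath_eq hT p2 hp2path
      rw [he] at hzp
      exact (onPath_iff_mem_support hT).2 hzp
    have hz2 : onPath G g b z := by
      have he := tPath_eq hT q2 hq2path
      rw [he] at hzq
      exact (onPath_iff_mem_support hT).2 hzq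
    -- dist u z = dist u g + dist g z
    have hzp' : z ∈ p.support := (Walk.support_dropUntil_subset _ hgp) hzp
    have huz : onPath G u a z := (onPath_iff_mem_support hT).2 hzp'
    have key : G.dist u z = G.dist u g + G.dist g z := by
      unfold onPath at hga hz1 huz; omega
    have hub : onPath G u b z := by
      unfold onPath at hgb hz2 ⊢
      have t := dist_triangle hT u z b
      omega
    have hzS : z ∈ S := Finset.mem_filter.2 ⟨List.mem_toFinset.2 hzp', hub⟩
    have := hgmax z hzS
    have hz0 : G.dist g z = 0 := by omega
    exact ((hT.isConnected.dist_eq_zero_iff (u := g) (v := z)).1 hz0).symm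
  -- assemble walk a -> g -> b as a path
  have hq2nodup : q2.support.Nodup := (Walk.isPath_def _).1 hq2path
  have hgtail : g ∉ q2.support.tail := by
    have hcons : q2.support = g :: q2.support.tail := q2.support_eq_cons
    intro hmem
    rw [hcons] at hq2nodup
    exact (List.nodup_cons.1 hq2nodup).1 hmem
  have hW : (p2.reverse.append q2).IsPath := by
    rw [Walk.isPath_def, Walk.support_append, Walk.support_reverse]
    refine List.Nodup.append ?_ ?_ ?_
    · exact List.nodup_reverse.2 ((Walk.isPath_def _).1 hp2path)
    · exact hq2nodup.tail
    · intro z hz1 hz2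
      have hz1' : z ∈ p2.support := List.mem_reverse.1 hz1
      have hz2' : z ∈ q2.support := List.mem_of_mem_tail hz2
      have : z = g := hdisj z hz1' hz2'
      subst this
      exact hgtail hz2
  have hWeq := tPath_eq hT _ hW
  have hgW : g ∈ (p2.reverse.append q2).support := by
    rw [Walk.mem_support_append_iff]
    left
    rw [Walk.support_reverse, List.mem_reverse]
    exact Walk.start_mem_support _
  rw [hWeq] at hgW
  exact (onPath_iff_mem_support hT).2 hgW


section Order
variable {le : V → V → Prop}

lemma lr (hle : IsLinearOrder V le) (x : V) : le x x :=
  hle.toIsPartialOrder.toIsPreorder.toRefl.refl x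
lemma lt' (hle : IsLinearOrder V le) {x y z : V} (h1 : le x y) (h2 : le y z) : le x z :=
  hle.toIsPartialOrder.toIsPreorder.toIsTrans.trans x y z h1 h2
lemma lto (hle : IsLinearOrder V le) (x y : V) : le x y ∨ le y x :=
  hle.toTotal.total x y
lemma lanti (hle : IsLinearOrder V le) {x y : V} (h1 : le x y) (h2 : le y x) : x = y :=
  hle.toIsPartialOrder.toAntisymm.antisymm x y h1 h2

/-- every nonempty list has a `le`-minimum. -/
lemma exists_list_min (hle : IsLinearOrder V le) : ∀ (l : List V), l ≠ [] → ∃ m ∈ l, ∀ x ∈ l, le m x := by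
  intro l
  induction l with
  | nil => intro h; exact absurd rfl h
  | cons a l ih =>
    intro _
    rcases eq_or_ne l [] with rfl | hl
    · exact ⟨a, List.mem_cons_self, by
        intro x hx
        rcases List.mem_cons.1 hx with rfl | h
        · exact lr hle x
        · simp at h⟩
    · obtain ⟨m, hm, hmin⟩ := ih hl
      rcases lto hle a m with h | h
      · exact ⟨a, List.mem_cons_self, by
          intro x hx
          rcases List.mem_cons.1 hx with rfl | hx
          · exact lr hle x
          · exact lt' hle h (hmin x hx)⟩
      · exact ⟨m, List.mem_cons_of_mem _ hm, by
          intro x hx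
          rcases List.mem_cons.1 hx with rfl | hx
          · exact h
          · exact hmin x hx⟩

/-- every nonempty (finite-type) set has a `le`-minimum. -/
lemma exists_set_min [Fintype V] (hle : IsLinearOrder V le) (K : Set V) (hK : K.Nonempty) :
    ∃ m ∈ K, ∀ x ∈ K, le m x := by
  classical
  have h : K.toFinset.toList ≠ [] := by
    simp [Finset.toList_eq_nil, Set.toFinset_eq_empty]
    exact Set.nonempty_iff_ne_empty.1 hK
  obtain ⟨m, hm, hmin⟩ := exists_list_min hle _ h
  rw [Finset.mem_toList, Set.mem_toFinset] at hm
  exact ⟨m, hm, fun x hx => hmin x (by rw [Finset.mem_toList, Set.mem_toFinset]; exact hx)⟩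

def TT (G : SimpleGraph V) (le : V → V → Prop) (z : V) : Set V := {w : V | inCompAbove G le z w}

lemma mem_TT_self (hle : IsLinearOrder V le) (z : V) : z ∈ TT G le z := by
  refine ⟨Walk.nil, ?_⟩
  intro x hx
  rw [Walk.support_nil, List.mem_singleton] at hx
  subst hx
  exact lr hle _

lemma le_of_mem_TT {z x : V} (h : x ∈ TT G le z) : le z x := by
  obtain ⟨p, hp⟩ := h
  exact hp x (Walk.end_mem_support p)

lemma TT_trans (hle : IsLinearOrder V le) {z z' x : V} (hz' : z' ∈ TT G le z) (hx : x ∈ TT G le z') : x ∈ TT G le z := by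
  obtain ⟨p, hp⟩ := hz'
  obtain ⟨q, hq⟩ := hx
  refine ⟨p.append q, ?_⟩
  intro y hy
  rcases (Walk.mem_support_append_iff _ _).1 hy with h | h
  · exact hp y h
  · exact lt' hle (hp z' (Walk.end_mem_support p)) (hq y h)

/-- every vertex on the defining walk is in the component -/
lemma mem_TT_of_support {z x y : V} (p : G.Walk z x) (hp : ∀ w ∈ p.support, le z w)
    (hy : y ∈ p.support) : y ∈ TT G le z :=
  ⟨p.takeUntil y hy, fun w hw => hp w (Walk.support_takeUntil_subset p hy hw)⟩

/-- components are path-closed -/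
lemma TT_path_closed (hT : G.IsTree) {z x : V} (hx : x ∈ TT G le z) {w : V}
    (hw : onPath G z x w) : w ∈ TT G le z := by
  obtain ⟨p, hp⟩ := hx
  have hsub := tPath_support_subset hT p
  have hwp : w ∈ (tPath hT z x).support := (onPath_iff_mem_support hT).1 hw
  exact mem_TT_of_support p hp (hsub hwp)

/-- the canonical labeling of any linear order on a tree is a hub labeling. -/
lemma canonical_isHubLabeling [Fintype V] (hle : IsLinearOrder V le) (hT : G.IsTree) :
    IsHubLabeling G (canonical G le) := by
  intro x y
  have hne : (tPath hT x y).support ≠ [] := Walk.support_ne_nil _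
  obtain ⟨z₀, hz₀, hmin⟩ := exists_list_min hle _ hne
  refine ⟨z₀, ?_, ?_, (onPath_iff_mem_support hT).2 hz₀⟩
  · -- x in TT z₀ via reversed takeUntil
    refine ⟨((tPath hT x y).takeUntil z₀ hz₀).reverse, ?_⟩
    intro w hw
    rw [Walk.support_reverse, List.mem_reverse] at hw
    exact hmin w (Walk.support_takeUntil_subset _ hz₀ hw)
  · refine ⟨(tPath hT x y).dropUntil z₀ hz₀, ?_⟩
    intro w hw
    exact hmin w (Walk.support_dropUntil_subset _ hz₀ hw)

end Order

lemma mem_canonical_iff {z x : V} : z ∈ canonical G le x ↔ x ∈ TT G le z := Iff.rfl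

/-- The key exchange inequality from optimality. -/
lemma F_bound [Fintype V] (hT : G.IsTree) (hle : IsLinearOrder V le)
    (hopt : ∀ H' : V → Set V, IsHubLabeling G H' →
      ∑ u : V, (canonical G le u).ncard ≤ ∑ u : V, (H' u).ncard)
    (u w : V) (hw : w ∈ TT G le u) (E : Finset V)
    (hES : ∀ z ∈ E, z ∈ TT G le u) (hwE : w ∉ E) :
    (TT G le w).ncard + ∑ z ∈ E, {x ∈ TT G le z | onPath G z x w}.ncard
      ≤ (TT G le u).ncard := by
  classical
  set H : V → Set V := canonical G le with hH
  set R : V → Set V := fun x => {z | z ∈ E ∧ x ∈ TT G le z ∧ onPath G z x w} with hR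
  set W : V → Set V := fun x => {y | y = w ∧ x ∈ TT G le u} with hW
  set H' : V → Set V := fun x => (H x \ R x) ∪ W x with hH'
  -- R x ⊆ H x
  have hRH : ∀ x, R x ⊆ H x := by
    intro x z hz
    exact hz.2.1
  -- x ∈ TT z for z ∈ E implies x ∈ TT u
  have hTTu : ∀ z ∈ E, ∀ x, x ∈ TT G le z → x ∈ TT G le u := by
    intro z hz x hx
    exact TT_trans hle (hES z hz) hx
  -- (1) H' is a hub labeling
  have hHL : IsHubLabeling G H' := by
    intro x y
    obtain ⟨z₀, hzx, hzy, hzp⟩ := canonical_isHubLabeling hle hT x y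
    by_cases hx : z₀ ∈ R x
    · obtain ⟨hzE, hxT, hzw⟩ := hx
      refine ⟨w, Or.inr ⟨rfl, hTTu z₀ hzE x hxT⟩,
        Or.inr ⟨rfl, hTTu z₀ hzE y hzy⟩, ?_⟩
      exact onPath_trans hT hzp (onPath_symm hzw)
    · by_cases hy : z₀ ∈ R y
      · obtain ⟨hzE, hyT, hzw⟩ := hy
        refine ⟨w, Or.inr ⟨rfl, hTTu z₀ hzE x hzx⟩,
          Or.inr ⟨rfl, hTTu z₀ hzE y hyT⟩, ?_⟩
        exact onPath_symm (onPath_trans hT (onPath_symm hzp) (onPath_symm hzw))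
      · exact ⟨z₀, Or.inl ⟨hzx, hx⟩, Or.inl ⟨hzy, hy⟩, hzp⟩
  -- TT w ⊆ TT u
  have hTTwu : TT G le w ⊆ TT G le u := fun x hx => TT_trans hle hw hx
  -- (2) per-vertex cardinality inequality
  have hcard : ∀ x : V, (H' x).ncard + (R x).ncard ≤
      (H x).ncard + (if x ∈ TT G le u \ TT G le w then 1 else 0) := by
    intro x
    by_cases hxw : x ∈ TT G le w
    · -- w already a hub of x
      have hwH : w ∈ H x := hxw
      have hWsub : W x ⊆ H x \ R x := by
        intro y hy
        obtain ⟨rfl, -⟩ := hy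
        exact ⟨hwH, fun hc => hwE hc.1⟩
      have : H' x = H x \ R x := by
        rw [hH']
        exact Set.union_eq_self_of_subset_right hWsub
      rw [this, if_neg (fun hc => hc.2 hxw)]
      rw [Set.ncard_diff_add_ncard_of_subset (hRH x)]
      omega
    · by_cases hxS : x ∈ TT G le u
      · rw [if_pos ⟨hxS, hxw⟩]
        have h1 : (H' x).ncard ≤ (H x \ R x).ncard + (W x).ncard := Set.ncard_union_le _ _
        have h2 : (W x).ncard ≤ 1 := by
          have : W x ⊆ {w} := by intro y hy; exact hy.1
          simpa using Set.ncard_le_ncard this (Set.finite_singleton w)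
        have h3 : (H x \ R x).ncard + (R x).ncard = (H x).ncard :=
          Set.ncard_diff_add_ncard_of_subset (hRH x)
        omega
      · -- x outside S: R x = ∅, W x = ∅
        have hRx : R x = ∅ := by
          ext z
          simp only [hR, Set.mem_setOf_eq, Set.mem_empty_iff_false, iff_false]
          rintro ⟨hzE, hxT, -⟩
          exact hxS (hTTu z hzE x hxT)
        have hWx : W x = ∅ := by
          ext y
          simp only [hW, Set.mem_setOf_eq, Set.mem_empty_iff_false, iff_false]
          rintro ⟨-, hc⟩
          exact hxS hc
        rw [hH']
        simp only [hRx, hWx, Set.diff_empty, Set.union_empty, Set.ncard_empty]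
        omega
  -- sum the indicator
  have hindsum : (∑ x : V, (if x ∈ TT G le u \ TT G le w then 1 else 0)) =
      (TT G le u \ TT G le w).ncard := by
    rw [Set.ncard_eq_toFinset_card']
    rw [Finset.card_eq_sum_ones]
    rw [← Finset.sum_filter]
    congr 1
    ext x
    simp [Set.mem_toFinset]
  -- double counting
  have hdouble : (∑ x : V, (R x).ncard) =
      ∑ z ∈ E, {x ∈ TT G le z | onPath G z x w}.ncard := by
    have h1 : ∀ x, (R x).ncard = ∑ z ∈ E, (if x ∈ TT G le z ∧ onPath G z x w then 1 else 0) := by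
      intro x
      rw [Set.ncard_eq_toFinset_card']
      have : (R x).toFinset = E.filter (fun z => x ∈ TT G le z ∧ onPath G z x w) := by
        ext z
        simp [hR, Set.mem_toFinset, and_assoc]
      rw [this, Finset.card_eq_sum_ones, ← Finset.sum_filter]
    have h2 : ∀ z, {x ∈ TT G le z | onPath G z x w}.ncard =
        ∑ x : V, (if x ∈ TT G le z ∧ onPath G z x w then 1 else 0) := by
      intro z
      rw [Set.ncard_eq_toFinset_card']
      rw [Finset.card_eq_sum_ones, ← Finset.sum_filter]
      congr 1
      ext x
      simp [Set.mem_toFinset, Set.mem_setOf_eq]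
    simp only [h1, h2]
    exact Finset.sum_comm
  -- apply optimality
  have hoptH := hopt H' hHL
  have hsum : (∑ x : V, (H' x).ncard) + (∑ x : V, (R x).ncard) ≤
      (∑ x : V, (H x).ncard) + (TT G le u \ TT G le w).ncard := by
    rw [← hindsum, ← Finset.sum_add_distrib, ← Finset.sum_add_distrib]
    exact Finset.sum_le_sum (fun x _ => hcard x)
  have hHeq : (∑ x : V, (H x).ncard) = ∑ u : V, (canonical G le u).ncard := rfl
  have hfinal : (∑ x : V, (R x).ncard) ≤ (TT G le u \ TT G le w).ncard := by omega
  rw [hdouble] at hfinal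
  have hdiff : (TT G le u \ TT G le w).ncard + (TT G le w).ncard = (TT G le u).ncard :=
    Set.ncard_diff_add_ncard_of_subset hTTwu
  omega


section Comp
variable (u w₀ : V)

/-- vertices on a walk whose support lies in `A` belong to the component. -/
lemma mem_compIn_of_support {A : Set V} {x y : V} (p : G.Walk w₀ x)
    (hp : ∀ z ∈ p.support, z ∈ A) (hy : y ∈ p.support) : y ∈ compIn G A w₀ :=
  ⟨p.takeUntil y hy, fun z hz => hp z (Walk.support_takeUntil_subset p hy hz)⟩

lemma compIn_subset {A : Set V} : compIn G A w₀ ⊆ A := by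
  rintro x ⟨p, hp⟩
  exact hp x (Walk.end_mem_support p)

lemma mem_compIn_self {A : Set V} (h : w₀ ∈ A) : w₀ ∈ compIn G A w₀ := by
  refine ⟨Walk.nil, ?_⟩
  intro z hz
  rw [Walk.support_nil, List.mem_singleton] at hz
  subst hz; exact h

/-- the component is closed under paths. -/
lemma compIn_path_closed (hT : G.IsTree) {A : Set V} {x y m : V} (hx : x ∈ compIn G A w₀)
    (hy : y ∈ compIn G A w₀) (hm : onPath G x y m) : m ∈ compIn G A w₀ := by
  obtain ⟨p, hp⟩ := hx
  obtain ⟨q, hq⟩ := hy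
  have hW : ∀ z ∈ (p.reverse.append q).support, z ∈ A := by
    intro z hz
    rcases (Walk.mem_support_append_iff _ _).1 hz with h | h
    · rw [Walk.support_reverse, List.mem_reverse] at h
      exact hp z h
    · exact hq z h
  have hmW : m ∈ (p.reverse.append q).support :=
    tPath_support_subset hT _ ((onPath_iff_mem_support hT).1 hm)
  rcases (Walk.mem_support_append_iff _ _).1 hmW with h | h
  · rw [Walk.support_reverse, List.mem_reverse] at h
    exact mem_compIn_of_support w₀ p hp h
  · -- m on q : from w₀
    exact mem_compIn_of_support w₀ q hq h

/-- any walk from a component vertex staying in `A` stays in the component. -/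
lemma mem_compIn_of_walk {A : Set V} {x y : V} (hx : x ∈ compIn G A w₀)
    (p : G.Walk x y) (hp : ∀ z ∈ p.support, z ∈ A) (z : V) (hz : z ∈ p.support) :
    z ∈ compIn G A w₀ := by
  obtain ⟨q, hq⟩ := hx
  have : z ∈ (q.append p).support := by
    rw [Walk.mem_support_append_iff]; right; exact hz
  refine mem_compIn_of_support w₀ (q.append p) ?_ this
  intro a ha
  rcases (Walk.mem_support_append_iff _ _).1 ha with h | h
  · exact hq a h
  · exact hp a h

end Comp

section Main
variable [Fintype V]

/-- the component of the minimum element equals its `TT` set. -/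
lemma TT_min_eq (hle : IsLinearOrder V le) (u w₀ : V) (hw₀ : w₀ ∈ TT G le u \ {u})
    {m1 : V} (hm1 : m1 ∈ compIn G (TT G le u \ {u}) w₀)
    (hmin : ∀ x ∈ compIn G (TT G le u \ {u}) w₀, le m1 x) :
    TT G le m1 = compIn G (TT G le u \ {u}) w₀ := by
  set A := TT G le u \ {u} with hA
  set K := compIn G A w₀ with hK
  have hKA : K ⊆ A := compIn_subset w₀
  have hm1u : m1 ∈ TT G le u := (hKA hm1).1
  have hm1ne : m1 ≠ u := (hKA hm1).2
  apply Set.eq_of_subset_of_subset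
  · -- TT m1 ⊆ K
    rintro x ⟨p, hp⟩
    have hsupp : ∀ z ∈ p.support, z ∈ A := by
      intro z hz
      have hzT : z ∈ TT G le m1 := mem_TT_of_support p hp hz
      refine ⟨TT_trans hle hm1u hzT, ?_⟩
      intro hzu
      rw [Set.mem_singleton_iff] at hzu
      subst hzu
      exact hm1ne (lanti hle (le_of_mem_TT hzT) (le_of_mem_TT hm1u))
    exact mem_compIn_of_walk w₀ hm1 p hsupp x (Walk.end_mem_support p)
  · -- K ⊆ TT m1
    intro x hx
    obtain ⟨p, hp⟩ := hm1
    obtain ⟨q, hq⟩ := hx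
    refine ⟨p.reverse.append q, ?_⟩
    intro z hz
    rcases (Walk.mem_support_append_iff _ _).1 hz with h | h
    · rw [Walk.support_reverse, List.mem_reverse] at h
      exact hmin z (mem_compIn_of_support w₀ p hp h)
    · exact hmin z (mem_compIn_of_support w₀ q hq h)

theorem main_bound (hT : G.IsTree) (hle : IsLinearOrder V le)
    (hopt : ∀ H' : V → Set V, IsHubLabeling G H' →
      ∑ u : V, (canonical G le u).ncard ≤ ∑ u : V, (H' u).ncard)
    (u w₀ : V) (hw₀ : w₀ ∈ TT G le u \ {u}) :
    6 * (compIn G (TT G le u \ {u}) w₀).ncard ≤ 5 * (TT G le u).ncard := by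
  classical
  by_contra hbig
  push_neg at hbig
  set A := TT G le u \ {u} with hA
  set K := compIn G A w₀ with hK
  set t := (TT G le u).ncard with ht
  set cK := K.ncard with hcK
  have hKA : K ⊆ A := compIn_subset w₀
  have hKu : K ⊆ TT G le u := fun x hx => (hKA hx).1
  have hcKt : cK ≤ t := Set.ncard_le_ncard hKu (Set.toFinite _)
  have hw₀K : w₀ ∈ K := mem_compIn_self w₀ hw₀
  -- minimum of K
  obtain ⟨m1, hm1K, hm1min⟩ := exists_set_min hle K ⟨w₀, hw₀K⟩
  have hTTm1 : TT G le m1 = K := TT_min_eq hle u w₀ hw₀ hm1K hm1min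
  have hm1u : m1 ∈ TT G le u := hKu hm1K
  have hm1ne : m1 ≠ u := (hKA hm1K).2
  -- F1 : cK + |D| ≤ t
  have hF1 := F_bound hT hle hopt u m1 hm1u {u} (by
      intro z hz
      rw [Finset.mem_singleton] at hz
      subst hz
      exact mem_TT_self hle _)
    (by rw [Finset.mem_singleton]; exact hm1ne)
  rw [Finset.sum_singleton, hTTm1] at hF1
  set D := {x ∈ TT G le u | onPath G u x m1} with hD
  -- Q' : part of K not below m1
  set Q : Set V := {x | x ∈ K ∧ ¬ onPath G u x m1} with hQ
  have hKQD : K ⊆ Q ∪ D := by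
    intro x hx
    by_cases hxp : onPath G u x m1
    · exact Or.inr ⟨hKu hx, hxp⟩
    · exact Or.inl ⟨hx, hxp⟩
  have hcKQD : cK ≤ Q.ncard + D.ncard :=
    le_trans (Set.ncard_le_ncard hKQD (Set.toFinite _)) (Set.ncard_union_le _ _)
  have hQpos : 0 < Q.ncard := by omega
  have hQne : Q.Nonempty := by
    rw [← Set.ncard_pos (Set.toFinite _)]; exact hQpos
  obtain ⟨m2, hm2Q, hm2min⟩ := exists_set_min hle Q hQne
  have hm2K : m2 ∈ K := hm2Q.1
  have hm2u : m2 ∈ TT G le u := hKu hm2K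
  have hm2ne : m2 ≠ u := (hKA hm2K).2
  have hm1notQ : m1 ∉ Q := by
    intro hc
    exact hc.2 (onPath_self_right hT u m1)
  have hm2nem1 : m2 ≠ m1 := fun hc => hm1notQ (hc ▸ hm2Q)
  -- Q ⊆ TT m2
  have hQTT : Q ⊆ TT G le m2 := by
    intro x hx
    have hxK : x ∈ K := hx.1
    refine ⟨tPath hT m2 x, ?_⟩
    intro z hz
    have hzpath : onPath G m2 x z := (onPath_iff_mem_support hT).2 hz
    have hzK : z ∈ K := compIn_path_closed w₀ hT hm2K hxK hzpath
    have hzQ : z ∈ Q := by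
      refine ⟨hzK, ?_⟩
      intro hzm1
      rcases onPath_sep hT hzm1 m2 with h | h
      · exact hm2Q.2 h
      · have : onPath G m2 x m1 := onPath_trans hT hzpath (onPath_symm h)
        rcases onPath_sep hT this u with h2 | h2
        · exact hm2Q.2 (onPath_symm h2)
        · exact hx.2 (onPath_symm h2)
    exact hm2min z hzQ
  -- case split
  by_cases hAB : onPath G u m1 m2
  · -- Case A
    have hF2 := F_bound hT hle hopt u m2 hm2u {u, m1} (by
        intro z hz
        rcases Finset.mem_insert.1 hz with rfl | hz
        · exact mem_TT_self hle _
        · rw [Finset.mem_singleton] at hz; subst hz; exact hm1u)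
      (by
        intro hc
        rcases Finset.mem_insert.1 hc with h | h
        · exact hm2ne h
        · rw [Finset.mem_singleton] at h; exact hm2nem1 h)
    rw [Finset.sum_insert (by rw [Finset.mem_singleton]; exact fun h => hm1ne h.symm),
        Finset.sum_singleton, hTTm1] at hF2
    -- lower bounds
    set Zu : Set V := {x | x ∈ K ∧ onPath G u x m2} with hZu
    set Z1 : Set V := {x ∈ K | onPath G m1 x m2} with hZ1
    have hZuSub : Zu ⊆ {x ∈ TT G le u | onPath G u x m2} := by
      intro x hx; exact ⟨hKu hx.1, hx.2⟩
    have hcover : K ⊆ Zu ∪ Z1 := by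
      intro x hx
      rcases onPath_sep hT hAB x with h | h
      · exact Or.inl ⟨hx, h⟩
      · exact Or.inr ⟨hx, h⟩
    have h1 : cK ≤ Zu.ncard + Z1.ncard :=
      le_trans (Set.ncard_le_ncard hcover (Set.toFinite _)) (Set.ncard_union_le _ _)
    have h2 : Zu.ncard ≤ {x ∈ TT G le u | onPath G u x m2}.ncard :=
      Set.ncard_le_ncard hZuSub (Set.toFinite _)
    have h3 : Q.ncard ≤ (TT G le m2).ncard := Set.ncard_le_ncard hQTT (Set.toFinite _)
    omega
  · -- Case B
    obtain ⟨g, hg1, hg2, hg3⟩ := exists_meet hT u m1 m2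
    have hgu : g ∈ TT G le u := TT_path_closed hT hm1u hg1
    have hgne : g ≠ u := by
      intro hc
      subst hc
      have : g ∈ K := compIn_path_closed w₀ hT hm1K hm2K hg3
      exact (hKA this).2 rfl
    have hgnem1 : g ≠ m1 := by
      intro hc
      subst hc
      exact hm2Q.2 hg2
    have hgnem2 : g ≠ m2 := by
      intro hc
      subst hc
      exact hAB hg1
    have hF3 := F_bound hT hle hopt u g hgu {u, m1, m2} (by
        intro z hz
        rcases Finset.mem_insert.1 hz with rfl | hz
        · exact mem_TT_self hle _
        · rcases Finset.mem_insert.1 hz with rfl | hz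
          · exact hm1u
          · rw [Finset.mem_singleton] at hz; subst hz; exact hm2u)
      (by
        intro hc
        rcases Finset.mem_insert.1 hc with h | hc
        · exact hgne h
        · rcases Finset.mem_insert.1 hc with h | hc
          · exact hgnem1 h
          · rw [Finset.mem_singleton] at hc; exact hgnem2 hc)
    have hum1 : (u : V) ∉ ({m1, m2} : Finset V) := by
      intro hc
      rcases Finset.mem_insert.1 hc with h | h
      · exact hm1ne h.symm
      · rw [Finset.mem_singleton] at h; exact hm2ne h.symm
    have hm1m2 : (m1 : V) ∉ ({m2} : Finset V) := by
      rw [Finset.mem_singleton]; exact fun h => hm2nem1 h.symm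
    rw [Finset.sum_insert hum1, Finset.sum_insert hm1m2, Finset.sum_singleton, hTTm1] at hF3
    -- lower bounds
    set Zu : Set V := {x | x ∈ K ∧ onPath G u x g} with hZu
    set Z1 : Set V := {x ∈ K | onPath G m1 x g} with hZ1
    set Z2 : Set V := {x | x ∈ Q ∧ onPath G m2 x g} with hZ2
    have hZuSub : Zu ⊆ {x ∈ TT G le u | onPath G u x g} := by
      intro x hx; exact ⟨hKu hx.1, hx.2⟩
    have hZ2Sub : Z2 ⊆ {x ∈ TT G le m2 | onPath G m2 x g} := by
      intro x hx; exact ⟨hQTT hx.1, hx.2⟩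
    have hcover1 : K ⊆ Zu ∪ Z1 := by
      intro x hx
      rcases onPath_sep hT hg1 x with h | h
      · exact Or.inl ⟨hx, h⟩
      · exact Or.inr ⟨hx, h⟩
    have hcover2 : Q ⊆ (Zu ∩ Z1) ∪ Z2 := by
      intro x hx
      have hxK : x ∈ K := hx.1
      by_cases hu' : onPath G u x g
      · by_cases hm1' : onPath G m1 x g
        · exact Or.inl ⟨⟨hxK, hu'⟩, ⟨hxK, hm1'⟩⟩
        · rcases onPath_sep hT hg3 x with h | h
          · exact absurd h hm1'
          · exact Or.inr ⟨hx, h⟩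
      · rcases onPath_sep hT hg2 x with h | h
        · exact absurd h hu'
        · exact Or.inr ⟨hx, h⟩
    -- cardinal arithmetic
    have e1 : (Zu ∪ Z1).ncard + (Zu ∩ Z1).ncard = Zu.ncard + Z1.ncard :=
      Set.ncard_union_add_ncard_inter _ _ (Set.toFinite _) (Set.toFinite _)
    have e2 : cK ≤ (Zu ∪ Z1).ncard := Set.ncard_le_ncard hcover1 (Set.toFinite _)
    have e3 : Q.ncard ≤ (Zu ∩ Z1).ncard + Z2.ncard :=
      le_trans (Set.ncard_le_ncard hcover2 (Set.toFinite _)) (Set.ncard_union_le _ _)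
    have e4 : Zu.ncard ≤ {x ∈ TT G le u | onPath G u x g}.ncard :=
      Set.ncard_le_ncard hZuSub (Set.toFinite _)
    have e5 : Z2.ncard ≤ {x ∈ TT G le m2 | onPath G m2 x g}.ncard :=
      Set.ncard_le_ncard hZ2Sub (Set.toFinite _)
    have e6 : 0 < (TT G le g).ncard := by
      rw [Set.ncard_pos (Set.toFinite _)]
      exact ⟨g, mem_TT_self hle g⟩
    omega

end Main

end TreeHub

theorem Msep_lower_bound_of_optimal {V : Type*} [Fintype V]
    (G : SimpleGraph V) (hT : G.IsTree)
    (le : V → V → Prop) (hle : IsLinearOrder V le)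
    (hopt : ∀ H' : V → Set V, IsHubLabeling G H' →
      ∑ u : V, (canonical G le u).ncard ≤ ∑ u : V, (H' u).ncard) :
    ∀ u : V, ({w : V | inCompAbove G le u w}.ncard : ℝ) / 6 ≤ (Msep G le u : ℝ) := by
  intro u
  classical
  have hSet : {w : V | inCompAbove G le u w} = TreeHub.TT G le u := rfl
  set t := (TreeHub.TT G le u).ncard with htdef
  set mc := maxCompCard G (TreeHub.TT G le u \ {u}) with hmcdef
  have hmain : 6 * mc ≤ 5 * t := by
    rw [hmcdef, maxCompCard]
    set M : Set ℕ := {k : ℕ | ∃ w ∈ TreeHub.TT G le u \ {u},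
      k = (compIn G (TreeHub.TT G le u \ {u}) w).ncard} with hM
    have hall : ∀ k ∈ M, 6 * k ≤ 5 * t := by
      rintro k ⟨w₀, hw₀, rfl⟩
      exact TreeHub.main_bound hT hle hopt u w₀ hw₀
    by_cases hne : M.Nonempty
    · have hbdd : BddAbove M := by
        refine ⟨Fintype.card V, ?_⟩
        rintro k ⟨w₀, hw₀, rfl⟩
        calc (compIn G (TreeHub.TT G le u \ {u}) w₀).ncard
            ≤ (Set.univ : Set V).ncard := Set.ncard_le_ncard (Set.subset_univ _) (Set.toFinite _)
          _ = Fintype.card V := by rw [Set.ncard_univ, Nat.card_eq_fintype_card]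
      exact hall _ (Nat.sSup_mem hne hbdd)
    · rw [Set.not_nonempty_iff_eq_empty] at hne
      rw [hne, csSup_empty]
      simp
  have hMsep : Msep G le u = t - mc := rfl
  rw [hMsep]
  rw [div_le_iff₀ (by norm_num : (0:ℝ) < 6)]
  have hnat : t ≤ (t - mc) * 6 := by omega
  exact_mod_cast hnat
end

section
/- For every real p with 1 < p < ∞ there exists a constant C > 0 such that for every finite tree T on n ≥ 2 vertices, every hierarchical hub labeling H of T that minimizes ∑_{u ∈ V} |H_u|^p over all hub labelings of T satisfies max_{u ∈ V} |H_u| ≤ C · (log n)². -/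
open SimpleGraph

namespace HubProof

set_option linter.unusedSectionVars false

variable {V : Type} [Fintype V] {G : SimpleGraph V}

/-- The unique path between two vertices of a tree. -/
noncomputable def tpath (hT : G.IsTree) (u v : V) : G.Walk u v :=
  (hT.existsUnique_path u v).exists.choose

lemma tpath_isPath (hT : G.IsTree) (u v : V) : (tpath hT u v).IsPath :=
  (hT.existsUnique_path u v).exists.choose_spec

lemma eq_tpath (hT : G.IsTree) {u v : V} (p : G.Walk u v) (hp : p.IsPath) :
    p = tpath hT u v := by
  obtain ⟨q, hq, hun⟩ := hT.existsUnique_path u v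
  rw [hun p hp, hun (tpath hT u v) (tpath_isPath hT u v)]

lemma tpath_length (hT : G.IsTree) (u v : V) :
    (tpath hT u v).length = G.dist u v := by
  obtain ⟨p, hp, hl⟩ := hT.isConnected.exists_path_of_dist u v
  rw [eq_tpath hT p hp] at hl; exact hl

lemma onPath_comm {u v w : V} : onPath G u v w ↔ onPath G v u w := by
  unfold onPath
  rw [dist_comm (u := u) (v := w), dist_comm (u := w) (v := v), dist_comm (u := u) (v := v)]
  omega

lemma onPath_left (u v : V) : onPath G u v u := by
  unfold onPath; rw [dist_self]; omega

lemma onPath_right (u v : V) : onPath G u v v := by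
  unfold onPath; rw [dist_self]; omega

lemma onPath_self (hT : G.IsTree) {u w : V} (h : onPath G u u w) : w = u := by
  unfold onPath at h
  rw [dist_self] at h
  have h1 : G.dist u w = 0 := by omega
  exact ((hT.isConnected.dist_eq_zero_iff).mp h1).symm

/-- Membership in the unique path is equivalent to the distance condition. -/
lemma onPath_iff_mem_support (hT : G.IsTree) (u v w : V) :
    onPath G u v w ↔ w ∈ (tpath hT u v).support := by
  constructor
  · intro h
    -- build path through w
    have p1 := tpath hT u w
    have p2 := tpath hT w v
    set q : G.Walk u v := (tpath hT u w).append (tpath hT w v) with hq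
    have hlen : q.length = G.dist u v := by
      rw [hq, SimpleGraph.Walk.length_append, tpath_length, tpath_length]; exact h
    have hqp : q.IsPath := q.isPath_of_length_eq_dist hlen
    have : q = tpath hT u v := eq_tpath hT q hqp
    rw [← this, hq]
    rw [SimpleGraph.Walk.mem_support_append_iff]
    left; exact SimpleGraph.Walk.end_mem_support _
  · intro h
    classical
    have h1 := SimpleGraph.Walk.take_spec (tpath hT u v) h
    have hl : ((tpath hT u v).takeUntil w h).length + ((tpath hT u v).dropUntil w h).length
        = G.dist u v := by
      rw [← SimpleGraph.Walk.length_append, h1, tpath_length]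
    have h2 : G.dist u w ≤ ((tpath hT u v).takeUntil w h).length := dist_le _
    have h3 : G.dist w v ≤ ((tpath hT u v).dropUntil w h).length := dist_le _
    have h4 : G.dist u v ≤ G.dist u w + G.dist w v := hT.isConnected.dist_triangle
    unfold onPath
    omega

/-- arithmetic: a point on the subpath is on the path. -/
lemma onPath_trans (hT : G.IsTree) {u v m z : V} (h1 : onPath G u v m) (h2 : onPath G u m z) :
    onPath G u v z := by
  unfold onPath at *
  have t1 : G.dist u v ≤ G.dist u z + G.dist z v := hT.isConnected.dist_triangle
  have t2 : G.dist z v ≤ G.dist z m + G.dist m v := hT.isConnected.dist_triangle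
  omega

/-- arithmetic: second-half version. -/
lemma onPath_trans' (hT : G.IsTree) {u v m z : V} (h1 : onPath G u v m) (h2 : onPath G m v z) :
    onPath G u v z := by
  rw [onPath_comm] at h1 h2 ⊢
  exact onPath_trans hT h1 h2

/-- arithmetic: from `m` on `P u v` and `z` on `P m v`, `z` determines `m` on `P u z`.  -/
lemma onPath_mid (hT : G.IsTree) {u v m z : V} (h1 : onPath G u v m) (h2 : onPath G m v z) :
    onPath G u z m := by
  unfold onPath at *
  have t1 : G.dist u v ≤ G.dist u z + G.dist z v := hT.isConnected.dist_triangle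
  have t2 : G.dist u z ≤ G.dist u m + G.dist m z := hT.isConnected.dist_triangle
  omega

/-- Path `P u v` is contained in `P u t ∪ P t v` for any `t`. -/
lemma onPath_union (hT : G.IsTree) {u v t z : V} (h : onPath G u v z) :
    onPath G u t z ∨ onPath G t v z := by
  classical
  rw [onPath_iff_mem_support hT] at h
  have hqp : ((tpath hT u t).append (tpath hT t v)).bypass.IsPath :=
    SimpleGraph.Walk.bypass_isPath _
  have heq : ((tpath hT u t).append (tpath hT t v)).bypass = tpath hT u v :=
    eq_tpath hT _ hqp
  rw [← heq] at h
  have h2 := SimpleGraph.Walk.support_bypass_subset _ h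
  rw [SimpleGraph.Walk.mem_support_append_iff] at h2
  rcases h2 with h2 | h2
  · left; rw [onPath_iff_mem_support hT]; exact h2
  · right; rw [onPath_iff_mem_support hT]; exact h2

/-- Split a path at one of its points. -/
lemma onPath_split (hT : G.IsTree) {u v m z : V} (hm : onPath G u v m) (hz : onPath G u v z) :
    onPath G u m z ∨ onPath G m v z := by
  exact onPath_union hT hz (t := m)

section Part2
variable {V : Type} [Fintype V] {G : SimpleGraph V}

set_option linter.unusedSectionVars false

/-- Edge lemma: for an edge `(u,v)` and any `z`, either `u` is on `P z v` or `v` on `P z u`. -/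
lemma edge_split (hT : G.IsTree) {u v : V} (h : G.Adj u v) (z : V) :
    onPath G z v u ∨ onPath G z u v := by
  classical
  by_cases hv : v ∈ (tpath hT z u).support
  · right; rw [onPath_iff_mem_support hT]; exact hv
  · left
    have hrev : ((tpath hT z u).reverse).IsPath := (tpath_isPath hT z u).reverse
    have hc : (SimpleGraph.Walk.cons h.symm (tpath hT z u).reverse).IsPath := by
      rw [SimpleGraph.Walk.cons_isPath_iff]
      refine ⟨hrev, ?_⟩
      rw [SimpleGraph.Walk.support_reverse, List.mem_reverse]
      exact hv
    have hc2 : ((SimpleGraph.Walk.cons h.symm (tpath hT z u).reverse).reverse).IsPath :=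
      hc.reverse
    have heq : (SimpleGraph.Walk.cons h.symm (tpath hT z u).reverse).reverse = tpath hT z v :=
      eq_tpath hT _ hc2
    rw [onPath_iff_mem_support hT, ← heq, SimpleGraph.Walk.support_reverse, List.mem_reverse]
    simp [SimpleGraph.Walk.support_cons, SimpleGraph.Walk.support_reverse]

lemma dist_getVert_le (hT : G.IsTree) {u v : V} (p : G.Walk u v) (i : ℕ) :
    G.dist u (p.getVert i) ≤ i := by
  induction p generalizing i with
  | nil =>
    rw [SimpleGraph.Walk.getVert_of_length_le _ (by simp)]
    simp [SimpleGraph.dist_self]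
  | @cons a b c h q ih =>
    cases i with
    | zero => simp [SimpleGraph.Walk.getVert_zero, SimpleGraph.dist_self]
    | succ n =>
      rw [SimpleGraph.Walk.getVert_cons_succ]
      have t1 : G.dist a (q.getVert n) ≤ G.dist a b + G.dist b (q.getVert n) :=
        hT.isConnected.dist_triangle
      have t2 : G.dist a b = 1 := SimpleGraph.dist_eq_one_iff_adj.mpr h
      have t3 := ih n
      omega

lemma dist_getVert_right_le (hT : G.IsTree) {u v : V} (p : G.Walk u v) (i : ℕ) :
    G.dist (p.getVert i) v ≤ p.length - i := by
  induction p generalizing i with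
  | nil =>
    rw [SimpleGraph.Walk.getVert_of_length_le _ (by simp)]
    simp [SimpleGraph.dist_self]
  | @cons a b c h q ih =>
    cases i with
    | zero =>
      simp only [SimpleGraph.Walk.getVert_zero, SimpleGraph.Walk.length_cons, Nat.zero_le,
        Nat.sub_zero]
      have t1 : G.dist a c ≤ G.dist a b + G.dist b c := hT.isConnected.dist_triangle
      have t2 : G.dist a b = 1 := SimpleGraph.dist_eq_one_iff_adj.mpr h
      have t3 : G.dist b c ≤ q.length := SimpleGraph.dist_le q
      omega
    | succ n =>
      rw [SimpleGraph.Walk.getVert_cons_succ]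
      have := ih n
      simp only [SimpleGraph.Walk.length_cons]
      omega

/-- On the unique path from `u` to `v`, the `i`-th vertex is at distance `i` from `u`. -/
lemma tpath_getVert_dist (hT : G.IsTree) {u v : V} {i : ℕ} (hi : i ≤ G.dist u v) :
    G.dist u ((tpath hT u v).getVert i) = i ∧
      G.dist ((tpath hT u v).getVert i) v = G.dist u v - i ∧
      onPath G u v ((tpath hT u v).getVert i) := by
  have hL := tpath_length hT u v
  have h1 := dist_getVert_le hT (tpath hT u v) i
  have h2 := dist_getVert_right_le hT (tpath hT u v) i
  rw [hL] at h2
  have h3 : G.dist u v ≤ G.dist u ((tpath hT u v).getVert i)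
      + G.dist ((tpath hT u v).getVert i) v := hT.isConnected.dist_triangle
  unfold onPath
  omega

/-- Two points on `P u v` at the same distance from `u` coincide. -/
lemma onPath_eq_of_dist_eq (hT : G.IsTree) {u v a b : V} (ha : onPath G u v a)
    (hb : onPath G u v b) (hd : G.dist u a = G.dist u b) : a = b := by
  rcases onPath_split hT hb ha with h | h
  · -- a on P u b
    have : G.dist u a + G.dist a b = G.dist u b := h
    have hz : G.dist a b = 0 := by omega
    exact (hT.isConnected.dist_eq_zero_iff.mp hz)
  · -- a on P b v ; then b on P u a
    have hmid : onPath G u a b := onPath_mid hT hb h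
    have : G.dist u b + G.dist b a = G.dist u a := hmid
    have hz : G.dist b a = 0 := by omega
    exact (hT.isConnected.dist_eq_zero_iff.mp hz).symm

/-- Median: any three vertices of a tree have a common "middle" point. -/
lemma median (hT : G.IsTree) (x y t : V) :
    ∃ m : V, onPath G x y m ∧ onPath G x t m ∧ onPath G y t m := by
  classical
  have hxA : x ∈ Finset.univ.filter (fun z => onPath G x y z ∧ onPath G x t z) := by
    simp only [Finset.mem_filter, Finset.mem_univ, true_and]
    exact ⟨onPath_left x y, onPath_left x t⟩
  obtain ⟨m, hmA, hmax⟩ := Finset.exists_max_image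
    (Finset.univ.filter (fun z => onPath G x y z ∧ onPath G x t z))
    (fun z => G.dist x z) ⟨x, hxA⟩
  simp only [Finset.mem_filter, Finset.mem_univ, true_and] at hmA
  obtain ⟨hmxy, hmxt⟩ := hmA
  by_cases hmy : m = y
  · subst hmy
    exact ⟨m, hmxy, hmxt, onPath_left _ _⟩
  refine ⟨m, hmxy, hmxt, ?_⟩
  -- m' : next vertex after m on the path x → y
  set p := tpath hT x y with hp
  set ℓ := G.dist x m with hℓ
  have hℓlt : ℓ < G.dist x y := by
    have : G.dist x m + G.dist m y = G.dist x y := hmxy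
    have hpos : 0 < G.dist m y := hT.isConnected.pos_dist_of_ne hmy
    omega
  have hgv := tpath_getVert_dist hT (u := x) (v := y) (i := ℓ) (le_of_lt hℓlt)
  have hgve : p.getVert ℓ = m :=
    onPath_eq_of_dist_eq hT hgv.2.2 hmxy (by rw [hgv.1])
  set m' := p.getVert (ℓ + 1) with hm'
  have hgv' := tpath_getVert_dist hT (u := x) (v := y) (i := ℓ + 1) hℓlt
  have hadj : G.Adj m m' := by
    rw [← hgve]
    exact p.adj_getVert_succ (by rw [hp, tpath_length]; exact hℓlt)
  have hm'xy : onPath G x y m' := hgv'.2.2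
  have hm'd : G.dist x m' = ℓ + 1 := hgv'.1
  have hm'nA : ¬ onPath G x t m' := by
    intro hcon
    have hmem : m' ∈ Finset.univ.filter (fun z => onPath G x y z ∧ onPath G x t z) := by
      simp only [Finset.mem_filter, Finset.mem_univ, true_and]
      exact ⟨hm'xy, hcon⟩
    have := hmax m' hmem
    rw [hm'd] at this
    omega
  have hm'yt : onPath G y t m' := by
    rcases onPath_union hT (t := t) hm'xy with h | h
    · exact absurd h hm'nA
    · exact onPath_comm.mp h
  -- edge split on (m, m') with z := t
  rcases edge_split hT hadj t with h | h
  · -- m on P t m' : d(t,m') = d(t,m) + 1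
    have h1 : G.dist t m + G.dist m m' = G.dist t m' := h
    have hmm' : G.dist m m' = 1 := SimpleGraph.dist_eq_one_iff_adj.mpr hadj
    have h2 : G.dist y m' + G.dist m' t = G.dist y t := hm'yt
    have h3 : G.dist x m' + G.dist m' y = G.dist x y := hm'xy
    have h4 : G.dist x m + G.dist m y = G.dist x y := hmxy
    -- goal : onPath y t m
    show G.dist y m + G.dist m t = G.dist y t
    have e1 : G.dist m' y = G.dist y m' := SimpleGraph.dist_comm
    have e2 : G.dist m t = G.dist t m := SimpleGraph.dist_comm
    have e3 : G.dist m' t = G.dist t m' := SimpleGraph.dist_comm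
    have e4 : G.dist y m = G.dist m y := SimpleGraph.dist_comm
    omega
  · -- m' on P t m : then m' would be in A, contradiction
    exfalso
    apply hm'nA
    have h1 : G.dist t m' + G.dist m' m = G.dist t m := h
    have hmm' : G.dist m m' = 1 := SimpleGraph.dist_eq_one_iff_adj.mpr hadj
    have h4 : G.dist x m + G.dist m t = G.dist x t := hmxt
    show G.dist x m' + G.dist m' t = G.dist x t
    have e2 : G.dist m' m = G.dist m m' := SimpleGraph.dist_comm
    have e3 : G.dist m' t = G.dist t m' := SimpleGraph.dist_comm
    have e4 : G.dist m t = G.dist t m := SimpleGraph.dist_comm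
    omega

end Part2
section Part3
variable {V : Type} [Fintype V] {G : SimpleGraph V}

set_option linter.unusedSectionVars false

/-- The set of `π`-ancestors of `v`: vertices `w` that are `π`-minimal on the path `P w v`. -/
def anc (G : SimpleGraph V) (π : V → ℕ) (v : V) : Set V :=
  {w | ∀ z, onPath G w v z → π w ≤ π z}

lemma mem_anc_self (π : V → ℕ) (hT : G.IsTree) (v : V) : v ∈ anc G π v := by
  intro z hz
  rw [onPath_comm] at hz
  rw [onPath_self hT hz]

lemma anc_le {π : V → ℕ} {v w z : V} (hw : w ∈ anc G π v) (hz : onPath G w v z) :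
    π w ≤ π z := hw z hz

/-- The `π`-minimum of a path belongs to the ancestor sets of both endpoints. -/
lemma exists_path_min (hT : G.IsTree) (π : V → ℕ) (u v : V) :
    ∃ m, onPath G u v m ∧ m ∈ anc G π u ∧ m ∈ anc G π v ∧
      ∀ z, onPath G u v z → π m ≤ π z := by
  classical
  have hu : u ∈ Finset.univ.filter (fun z => onPath G u v z) := by
    simp only [Finset.mem_filter, Finset.mem_univ, true_and]
    exact onPath_left u v
  obtain ⟨m, hmA, hmin⟩ := Finset.exists_min_image
    (Finset.univ.filter (fun z => onPath G u v z)) π ⟨u, hu⟩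
  simp only [Finset.mem_filter, Finset.mem_univ, true_and] at hmA
  have hmin' : ∀ z, onPath G u v z → π m ≤ π z := by
    intro z hz
    exact hmin z (by simp only [Finset.mem_filter, Finset.mem_univ, true_and]; exact hz)
  refine ⟨m, hmA, ?_, ?_, hmin'⟩
  · intro z hz
    rw [onPath_comm] at hz
    exact hmin' z (onPath_trans hT hmA hz)
  · intro z hz
    rw [onPath_comm] at hz
    have h1 : onPath G v u m := onPath_comm.mp hmA
    have h2 : onPath G v u z := onPath_trans hT h1 hz
    exact hmin' z (onPath_comm.mp h2)

lemma anc_isHubLabeling (hT : G.IsTree) (π : V → ℕ) :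
    IsHubLabeling G (fun v => anc G π v) := by
  intro u v
  obtain ⟨m, h1, h2, h3, _⟩ := exists_path_min hT π u v
  exact ⟨m, h2, h3, h1⟩

/-- In a hierarchical hub labeling with ranking `π`, each label contains all `π`-ancestors. -/
lemma anc_subset_label (hT : G.IsTree) {π : V → ℕ} (hπ : Function.Injective π)
    {H : V → Set V} (hH : IsHubLabeling G H) (hh : ∀ u : V, ∀ w ∈ H u, π w ≤ π u) (v : V) :
    anc G π v ⊆ H v := by
  intro w hw
  obtain ⟨x, hxw, hxv, hxp⟩ := hH w v
  have h1 : π x ≤ π w := hh w x hxw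
  have h2 : π w ≤ π x := anc_le hw hxp
  have : x = w := hπ (le_antisymm h1 h2)
  rwa [this] at hxv

/-- An optimal hierarchical hub labeling is exactly the ancestor labeling. -/
lemma label_eq_anc (hT : G.IsTree) {p : ℝ} (hp : 0 < p) {π : V → ℕ}
    (hπ : Function.Injective π) {H : V → Set V} (hH : IsHubLabeling G H)
    (hh : ∀ u : V, ∀ w ∈ H u, π w ≤ π u)
    (hopt : ∀ H' : V → Set V, IsHubLabeling G H' →
      ∑ u : V, ((H u).ncard : ℝ) ^ p ≤ ∑ u : V, ((H' u).ncard : ℝ) ^ p) (v : V) :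
    H v = anc G π v := by
  by_contra hne
  have hsub : ∀ u, anc G π u ⊆ H u := fun u => anc_subset_label hT hπ hH hh u
  have hle : ∀ u : V, (((anc G π u).ncard : ℝ)) ^ p ≤ ((H u).ncard : ℝ) ^ p := by
    intro u
    apply Real.rpow_le_rpow (by positivity)
    · exact_mod_cast Set.ncard_le_ncard (hsub u) (Set.toFinite _)
    · exact le_of_lt hp
  have hlt : (((anc G π v).ncard : ℝ)) ^ p < ((H v).ncard : ℝ) ^ p := by
    apply Real.rpow_lt_rpow (by positivity) _ hp
    have hss : anc G π v ⊂ H v := ssubset_of_subset_of_ne (hsub v) (fun h => hne h.symm)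
    exact_mod_cast Set.ncard_lt_ncard hss (Set.toFinite _)
  have hs : ∑ u : V, ((anc G π u).ncard : ℝ) ^ p < ∑ u : V, ((H u).ncard : ℝ) ^ p :=
    Finset.sum_lt_sum (fun u _ => hle u) ⟨v, Finset.mem_univ v, hlt⟩
  have := hopt (fun v => anc G π v) (anc_isHubLabeling hT π)
  linarith

end Part3

section Part4
variable {V : Type} [Fintype V] {G : SimpleGraph V}

set_option linter.unusedSectionVars false
open scoped Classical

/-- A set of vertices closed under taking paths. -/
def pclosed (G : SimpleGraph V) (S : Finset V) : Prop :=
  ∀ x ∈ S, ∀ y ∈ S, ∀ z, onPath G x y z → z ∈ S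

/-- The branch (component) of `x` in `S` with the vertex `c` deleted. -/
noncomputable def branch (G : SimpleGraph V) (S : Finset V) (c x : V) : Finset V :=
  S.filter (fun y => y ≠ c ∧ ¬ onPath G x y c)

lemma mem_branch {S : Finset V} {c x y : V} :
    y ∈ branch G S c x ↔ y ∈ S ∧ y ≠ c ∧ ¬ onPath G x y c := by
  simp [branch]

lemma not_onPath_trans (hT : G.IsTree) {x y z c : V} (h1 : ¬ onPath G x y c)
    (h2 : ¬ onPath G y z c) : ¬ onPath G x z c := by
  intro h
  rcases onPath_union hT (t := y) h with h' | h'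
  · exact h1 h'
  · exact h2 h'

lemma self_mem_branch (hT : G.IsTree) {S : Finset V} {c x : V} (hx : x ∈ S) (hxc : x ≠ c) :
    x ∈ branch G S c x := by
  rw [mem_branch]
  refine ⟨hx, hxc, ?_⟩
  intro h
  exact hxc (onPath_self hT h).symm

lemma branch_eq_of_mem (hT : G.IsTree) {S : Finset V} {c x y : V}
    (hy : y ∈ branch G S c x) : branch G S c y = branch G S c x := by
  rw [mem_branch] at hy
  obtain ⟨hyS, hyc, hxy⟩ := hy
  ext z
  rw [mem_branch, mem_branch]
  constructor
  · rintro ⟨hzS, hzc, hyz⟩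
    exact ⟨hzS, hzc, not_onPath_trans hT hxy hyz⟩
  · rintro ⟨hzS, hzc, hxz⟩
    have hyx : ¬ onPath G y x c := fun h => hxy (onPath_comm.mp h)
    exact ⟨hzS, hzc, not_onPath_trans hT hyx hxz⟩

lemma branch_pclosed (hT : G.IsTree) {S : Finset V} (hS : pclosed G S) (c x : V) :
    pclosed G (branch G S c x) := by
  intro a ha b hb z hz
  rw [mem_branch] at ha hb ⊢
  obtain ⟨haS, hac, hxa⟩ := ha
  obtain ⟨hbS, hbc, hxb⟩ := hb
  have hab : ¬ onPath G a b c := by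
    have hax : ¬ onPath G a x c := fun h => hxa (onPath_comm.mp h)
    exact not_onPath_trans hT hax hxb
  refine ⟨hS a haS b hbS z hz, ?_, ?_⟩
  · rintro rfl
    exact hab hz
  · -- ¬ onPath x z c
    have haz : ¬ onPath G a z c := by
      intro h
      -- c on P(a,z) ⊆ P(a,b)
      exact hab (onPath_trans hT hz h)
    exact not_onPath_trans hT hxa haz
  
lemma branch_subset {S : Finset V} {c x : V} : branch G S c x ⊆ S := by
  intro y hy; rw [mem_branch] at hy; exact hy.1

lemma branch_card_lt {S : Finset V} {c x : V} (hc : c ∈ S) :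
    (branch G S c x).card < S.card := by
  have h1 : branch G S c x ⊆ S.erase c := by
    intro y hy; rw [mem_branch] at hy
    exact Finset.mem_erase.mpr ⟨hy.2.1, hy.1⟩
  calc (branch G S c x).card ≤ (S.erase c).card := Finset.card_le_card h1
    _ < S.card := by
        rw [Finset.card_erase_of_mem hc]
        have : 0 < S.card := Finset.card_pos.mpr ⟨c, hc⟩
        omega

end Part4

section Part5
variable {V : Type} [Fintype V] {G : SimpleGraph V}

set_option linter.unusedSectionVars false
open scoped Classical

/-- Every vertex in the branch of `x0` at `c` is reached from `c` through `c`'s neighbor `u`. -/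
lemma branch_via_neighbor (hT : G.IsTree) {c x0 u z : V}
    (hu1 : onPath G c x0 u) (hud : G.dist c u = 1)
    (hz : ¬ onPath G x0 z c) : onPath G c z u := by
  obtain ⟨m, hm1, hm2, hm3⟩ := median hT x0 z c
  have hmc : m ≠ c := by
    rintro rfl
    exact hz hm1
  have hm2' : onPath G c x0 m := onPath_comm.mp hm2
  rcases onPath_split hT hm2' hu1 with h | h
  · -- u on P c m
    have hczm : onPath G c z m := onPath_comm.mp hm3
    exact onPath_trans hT hczm h
  · -- u on P m x0 : then m = u
    have hmid : onPath G c u m := onPath_mid hT hm2' h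
    have h1 : G.dist c m + G.dist m u = G.dist c u := hmid
    have h2 : G.dist c m ≠ 0 := fun hcm =>
      hmc ((hT.isConnected.dist_eq_zero_iff.mp hcm)).symm
    have h3 : G.dist m u = 0 := by omega
    have hmu : m = u := hT.isConnected.dist_eq_zero_iff.mp h3
    rw [← hmu]
    exact onPath_comm.mp hm3

/-- Conversely, everything reached through the neighbor `u` is in the branch of `x0`. -/
lemma off_branch (hT : G.IsTree) {c x0 u z : V}
    (hu1 : onPath G c x0 u) (hud : G.dist c u = 1)
    (h : onPath G c z u) : ¬ onPath G x0 z c ∧ z ≠ c := by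
  constructor
  · intro hxz
    have hmid : onPath G x0 u c := onPath_mid hT hxz h
    have h1 : G.dist x0 c + G.dist c u = G.dist x0 u := hmid
    have h2 : G.dist c u + G.dist u x0 = G.dist c x0 := hu1
    have e1 : G.dist x0 c = G.dist c x0 := SimpleGraph.dist_comm
    have e2 : G.dist x0 u = G.dist u x0 := SimpleGraph.dist_comm
    omega
  · intro hzc
    rw [hzc] at h
    have hueq : u = c := onPath_self hT h
    rw [hueq, SimpleGraph.dist_self] at hud
    omega

/-- Centroid existence: a vertex whose branches all have at most half the size. -/
lemma exists_centroid (hT : G.IsTree) {S : Finset V} (hS : pclosed G S) (hne : S.Nonempty) :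
    ∃ c ∈ S, ∀ x ∈ S, x ≠ c → 2 * (branch G S c x).card ≤ S.card := by
  classical
  set F : V → ℕ := fun c => (S.erase c).sup (fun x => (branch G S c x).card) with hF
  obtain ⟨c, hcS, hmin⟩ := Finset.exists_min_image S F hne
  refine ⟨c, hcS, ?_⟩
  by_contra hcon
  push_neg at hcon
  obtain ⟨x0, hx0S, hx0c, hBbig⟩ := hcon
  set B := branch G S c x0 with hB
  have hBF : B.card ≤ F c :=
    Finset.le_sup (f := fun x => (branch G S c x).card) (Finset.mem_erase.mpr ⟨hx0c, hx0S⟩)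
  have hdpos : 1 ≤ G.dist c x0 :=
    hT.isConnected.pos_dist_of_ne (fun h => hx0c h.symm)
  obtain ⟨hd1, -, hu1⟩ := tpath_getVert_dist hT (u := c) (v := x0) (i := 1) hdpos
  set u := (tpath hT c x0).getVert 1 with hu
  have huc : u ≠ c := by
    intro h
    rw [h, SimpleGraph.dist_self] at hd1
    omega
  have huS : u ∈ S := hS c hcS x0 hx0S u hu1
  have huB : u ∈ B := by
    rw [hB, mem_branch]
    refine ⟨huS, huc, ?_⟩
    intro h
    have h1 : G.dist x0 c + G.dist c u = G.dist x0 u := h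
    have h2 : G.dist c u + G.dist u x0 = G.dist c x0 := hu1
    have e1 : G.dist x0 c = G.dist c x0 := SimpleGraph.dist_comm
    have e2 : G.dist x0 u = G.dist u x0 := SimpleGraph.dist_comm
    omega
  have hBpos : 0 < B.card := Finset.card_pos.mpr ⟨u, huB⟩
  have hBS : B ⊆ S := branch_subset
  have hFu : F u < B.card := by
    rw [hF]
    rw [Finset.sup_lt_iff (by simpa using hBpos : (⊥ : ℕ) < B.card)]
    intro y hy
    rw [Finset.mem_erase] at hy
    by_cases hcy : onPath G c y u
    · -- branch of y at u is inside B, missing u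
      have hsub : branch G S u y ⊆ B.erase u := by
        intro z hz
        rw [mem_branch] at hz
        obtain ⟨hzS, hzu, hyz⟩ := hz
        have hczu : onPath G c z u := by
          rcases onPath_union hT (t := z) hcy with h | h
          · exact h
          · exact absurd (onPath_comm.mp h) hyz
        obtain ⟨hnz, hzc⟩ := off_branch hT hu1 hd1 hczu
        exact Finset.mem_erase.mpr ⟨hzu, by rw [hB, mem_branch]; exact ⟨hzS, hzc, hnz⟩⟩
      calc (branch G S u y).card ≤ (B.erase u).card := Finset.card_le_card hsub
        _ < B.card := by rw [Finset.card_erase_of_mem huB]; omega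
    · -- branch of y at u is the branch of c, disjoint from B
      have hyB : y ∈ branch G S u c := by
        rw [mem_branch]
        exact ⟨hy.2, hy.1, hcy⟩
      have heq : branch G S u y = branch G S u c := branch_eq_of_mem hT hyB
      rw [heq]
      have hdisj : ∀ z ∈ branch G S u c, z ∉ B := by
        intro z hz hzB
        rw [mem_branch] at hz hzB
        exact hz.2.2 (branch_via_neighbor hT hu1 hd1 hzB.2.2)
      have hsub : branch G S u c ⊆ S \ B := fun z hz =>
        Finset.mem_sdiff.mpr ⟨branch_subset hz, hdisj z hz⟩
      calc (branch G S u c).card ≤ (S \ B).card := Finset.card_le_card hsub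
        _ = S.card - B.card := Finset.card_sdiff_of_subset hBS
        _ < B.card := by omega
  have := hmin u huS
  omega

end Part5

section Part6
variable {V : Type} [Fintype V] {G : SimpleGraph V}

set_option linter.unusedSectionVars false
open scoped Classical

/-- Centroid decomposition: every path-closed set `S` admits a "hub labeling" of `S` with
labels of size at most `log₂ |S| + 1`. -/
lemma centroid_labeling (hT : G.IsTree) :
    ∀ n : ℕ, ∀ S : Finset V, S.card ≤ n → pclosed G S →
      ∃ L : V → Finset V,
        (∀ x ∈ S, L x ⊆ S) ∧
        (∀ x ∈ S, (L x).card ≤ Nat.log 2 S.card + 1) ∧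
        (∀ x ∈ S, ∀ y ∈ S, ∃ w, w ∈ L x ∧ w ∈ L y ∧ onPath G x y w) := by
  intro n
  induction n with
  | zero =>
    intro S hcard _
    have hS : S = ∅ := Finset.card_eq_zero.mp (Nat.le_zero.mp hcard)
    subst hS
    exact ⟨fun _ => ∅, by simp, by simp, by simp⟩
  | succ n IH =>
    intro S hcard hcl
    rcases Finset.eq_empty_or_nonempty S with rfl | hne
    · exact ⟨fun _ => ∅, by simp, by simp, by simp⟩
    obtain ⟨c, hcS, hcent⟩ := exists_centroid hT hcl hne
    have key : ∀ B : Finset V, ∃ L' : V → Finset V,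
        B.card ≤ n → pclosed G B →
        ((∀ x ∈ B, L' x ⊆ B) ∧ (∀ x ∈ B, (L' x).card ≤ Nat.log 2 B.card + 1) ∧
         (∀ x ∈ B, ∀ y ∈ B, ∃ w, w ∈ L' x ∧ w ∈ L' y ∧ onPath G x y w)) := by
      intro B
      by_cases h1 : B.card ≤ n ∧ pclosed G B
      · obtain ⟨L', hL⟩ := IH B h1.1 h1.2
        exact ⟨L', fun _ _ => hL⟩
      · exact ⟨fun _ => ∅, fun h2 h3 => absurd ⟨h2, h3⟩ h1⟩
    choose ℒ hℒ using key
    have hbn : ∀ x, (branch G S c x).card ≤ n := by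
      intro x
      have := branch_card_lt (G := G) (S := S) (c := c) (x := x) hcS
      omega
    have hbcl : ∀ x, pclosed G (branch G S c x) := fun x => branch_pclosed hT hcl c x
    refine ⟨fun x => if x ∈ S ∧ x ≠ c then insert c (ℒ (branch G S c x) x) else {c},
      ?_, ?_, ?_⟩
    · -- subset
      intro x hx
      dsimp only
      by_cases hcase : x ∈ S ∧ x ≠ c
      · rw [if_pos hcase]
        intro w hw
        rcases Finset.mem_insert.mp hw with rfl | hw
        · exact hcS
        · have hxB : x ∈ branch G S c x := self_mem_branch hT hcase.1 hcase.2
          exact branch_subset ((hℒ _ (hbn x) (hbcl x)).1 x hxB hw)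
      · rw [if_neg hcase]
        intro w hw
        rw [Finset.mem_singleton.mp hw]
        exact hcS
    · -- cardinality
      intro x hx
      dsimp only
      by_cases hcase : x ∈ S ∧ x ≠ c
      · rw [if_pos hcase]
        have hxB : x ∈ branch G S c x := self_mem_branch hT hcase.1 hcase.2
        have h1 : (ℒ (branch G S c x) x).card ≤ Nat.log 2 (branch G S c x).card + 1 :=
          (hℒ _ (hbn x) (hbcl x)).2.1 x hxB
        have hBpos : (branch G S c x).card ≠ 0 :=
          (Finset.card_pos.mpr ⟨x, hxB⟩).ne'
        have h2 : Nat.log 2 (branch G S c x).card + 1 ≤ Nat.log 2 S.card := by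
          rw [← Nat.log_mul_base (by norm_num) hBpos]
          apply Nat.log_mono_right
          have := hcent x hcase.1 hcase.2
          omega
        calc (insert c (ℒ (branch G S c x) x)).card
            ≤ (ℒ (branch G S c x) x).card + 1 := Finset.card_insert_le _ _
          _ ≤ Nat.log 2 S.card + 1 := by omega
      · rw [if_neg hcase]
        simp
    · -- hub property
      intro x hx y hy
      by_cases hxc : x = c
      · subst hxc
        refine ⟨x, ?_, ?_, onPath_left x y⟩
        · dsimp only
          rw [if_neg (by simp)]
          exact Finset.mem_singleton_self _
        · dsimp only
          by_cases hcase : y ∈ S ∧ y ≠ x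
          · rw [if_pos hcase]; exact Finset.mem_insert_self _ _
          · rw [if_neg hcase]; exact Finset.mem_singleton_self _
      by_cases hyc : y = c
      · subst hyc
        refine ⟨y, ?_, ?_, onPath_right x y⟩
        · dsimp only
          rw [if_pos (show x ∈ S ∧ x ≠ y from ⟨hx, hxc⟩)]
          exact Finset.mem_insert_self _ _
        · dsimp only
          rw [if_neg (by simp)]; exact Finset.mem_singleton_self _
      by_cases hsame : onPath G x y c
      · -- different branches: c is the hub
        refine ⟨c, ?_, ?_, hsame⟩
        · dsimp only
          rw [if_pos (show x ∈ S ∧ x ≠ c from ⟨hx, hxc⟩)]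
          exact Finset.mem_insert_self _ _
        · dsimp only
          rw [if_pos (show y ∈ S ∧ y ≠ c from ⟨hy, hyc⟩)]
          exact Finset.mem_insert_self _ _
      · -- same branch
        have hyB : y ∈ branch G S c x := mem_branch.mpr ⟨hy, hyc, hsame⟩
        have hxB : x ∈ branch G S c x := self_mem_branch hT hx hxc
        obtain ⟨w, hw1, hw2, hw3⟩ := (hℒ _ (hbn x) (hbcl x)).2.2 x hxB y hyB
        refine ⟨w, ?_, ?_, hw3⟩
        · dsimp only
          rw [if_pos (show x ∈ S ∧ x ≠ c from ⟨hx, hxc⟩)]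
          exact Finset.mem_insert_of_mem hw1
        · dsimp only
          rw [if_pos (show y ∈ S ∧ y ≠ c from ⟨hy, hyc⟩)]
          rw [branch_eq_of_mem hT hyB]
          exact Finset.mem_insert_of_mem hw2

end Part6

section Part7
variable {V : Type} [Fintype V] {G : SimpleGraph V}

set_option linter.unusedSectionVars false
open scoped Classical

variable {π : V → ℕ} {vs : V} {l : List V}

/-- The set `S j`: vertices whose path to `vs` avoids the first `j` ancestors of `vs`. -/
noncomputable def Sj (G : SimpleGraph V) (vs : V) (l : List V) (j : ℕ) : Finset V :=
  Finset.univ.filter (fun x => ∀ i < j, ¬ onPath G x vs (l.getD i vs))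

lemma mem_Sj {j : ℕ} {x : V} :
    x ∈ Sj G vs l j ↔ ∀ i < j, ¬ onPath G x vs (l.getD i vs) := by
  simp [Sj]

lemma Sj_anti {j j' : ℕ} (h : j ≤ j') : Sj G vs l j' ⊆ Sj G vs l j := by
  intro x hx
  rw [mem_Sj] at hx ⊢
  exact fun i hi => hx i (lt_of_lt_of_le hi h)

section SortedList

variable (hπ : Function.Injective π)
  (hmem : ∀ x, x ∈ l ↔ x ∈ anc G π vs)
  (hnd : l.Nodup)
  (hsort : l.Pairwise (fun a b => π a ≤ π b))

include hπ hnd hsort in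
lemma w_strict {i j : ℕ} (hij : i < j) (hj : j < l.length) :
    π (l.getD i vs) < π (l.getD j vs) := by
  have hi : i < l.length := lt_trans hij hj
  rw [List.getD_eq_getElem l vs hi, List.getD_eq_getElem l vs hj]
  have hle : π l[i] ≤ π l[j] := by
    have := hsort.rel_get_of_lt (a := ⟨i, hi⟩) (b := ⟨j, hj⟩) (by exact hij)
    simpa using this
  rcases lt_or_eq_of_le hle with h | h
  · exact h
  · exfalso
    have : l[i] = l[j] := hπ h
    have hne : i ≠ j := Nat.ne_of_lt hij
    rw [List.Nodup.getElem_inj_iff hnd] at this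
    exact hne this

include hπ hnd hsort in
lemma w_le_iff {i j : ℕ} (hi : i < l.length) (hj : j < l.length)
    (h : π (l.getD i vs) ≤ π (l.getD j vs)) : i ≤ j := by
  by_contra hc
  push_neg at hc
  have := w_strict (π := π) (vs := vs) hπ hnd hsort hc hi
  omega

include hmem in
lemma w_mem_anc {i : ℕ} (hi : i < l.length) : l.getD i vs ∈ anc G π vs := by
  rw [← hmem]
  rw [List.getD_eq_getElem l vs hi]
  exact List.getElem_mem hi

lemma pi_le_of_mem_anc {u : V} (hu : u ∈ anc G π vs) : π u ≤ π vs :=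
  anc_le hu (onPath_right u vs)

include hmem in
lemma vs_mem_l (hT : G.IsTree) : vs ∈ l := (hmem vs).mpr (mem_anc_self π hT vs)

include hπ hmem hnd hsort in
lemma l_nonempty (hT : G.IsTree) : 0 < l.length :=
  List.length_pos_iff.mpr (List.ne_nil_of_mem (vs_mem_l hmem hT))

include hπ hmem hnd hsort in
lemma w_last (hT : G.IsTree) : l.getD (l.length - 1) vs = vs := by
  have hvs := vs_mem_l hmem hT
  obtain ⟨i, hi, hieq⟩ := List.getElem_of_mem hvs
  have hlen := l_nonempty hπ hmem hnd hsort hT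
  by_contra hne
  have hil : i < l.length - 1 := by
    rcases Nat.lt_or_ge i (l.length - 1) with h | h
    · exact h
    · exfalso
      have : i = l.length - 1 := by omega
      rw [← List.getD_eq_getElem l vs hi, this] at hieq
      exact hne hieq
  have h1 : π (l.getD i vs) < π (l.getD (l.length - 1) vs) :=
    w_strict hπ hnd hsort hil (by omega)
  rw [List.getD_eq_getElem l vs hi, hieq] at h1
  have h2 : π (l.getD (l.length - 1) vs) ≤ π vs :=
    pi_le_of_mem_anc (w_mem_anc hmem (by omega))
  omega

include hπ hmem hnd hsort in
lemma vs_mem_Sj (hT : G.IsTree) {j : ℕ} (hj : j ≤ l.length - 1) : vs ∈ Sj G vs l j := by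
  rw [mem_Sj]
  intro i hi h
  have hlen := l_nonempty hπ hmem hnd hsort hT
  have heq : l.getD i vs = vs := onPath_self hT (onPath_comm.mp h)
  have h1 : π (l.getD i vs) < π (l.getD (l.length - 1) vs) :=
    w_strict hπ hnd hsort (by omega) (by omega)
  rw [w_last hπ hmem hnd hsort hT, heq] at h1
  omega

include hπ hmem hnd hsort in
lemma w_mem_Sj {i j : ℕ} (hji : j ≤ i) (hi : i < l.length) :
    l.getD i vs ∈ Sj G vs l j := by
  rw [mem_Sj]
  intro i' hi' h
  have hanc : l.getD i vs ∈ anc G π vs := w_mem_anc hmem hi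
  have h1 : π (l.getD i vs) ≤ π (l.getD i' vs) := anc_le hanc h
  have h2 : π (l.getD i' vs) < π (l.getD i vs) := w_strict hπ hnd hsort (by omega) hi
  omega

include hπ hmem hnd hsort in
lemma Sj_card_ge {j : ℕ} (hj : j ≤ l.length) :
    l.length - j ≤ (Sj G vs l j).card := by
  have hsub : (Finset.Ico j l.length).image (fun i => l.getD i vs) ⊆ Sj G vs l j := by
    intro x hx
    rw [Finset.mem_image] at hx
    obtain ⟨i, hi, rfl⟩ := hx
    rw [Finset.mem_Ico] at hi
    exact w_mem_Sj hπ hmem hnd hsort hi.1 hi.2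
  have hinj : Set.InjOn (fun i => l.getD i vs) (Finset.Ico j l.length) := by
    intro a ha b hb hab
    simp only at hab
    rw [Finset.coe_Ico, Set.mem_Ico] at ha hb
    by_contra hne
    rcases Nat.lt_or_ge a b with h | h
    · have := w_strict (π := π) (vs := vs) hπ hnd hsort h hb.2
      rw [hab] at this; omega
    · have hba : b < a := by omega
      have := w_strict (π := π) (vs := vs) hπ hnd hsort hba ha.2
      rw [hab] at this; omega
  calc l.length - j = (Finset.Ico j l.length).card := by rw [Nat.card_Ico]
    _ = ((Finset.Ico j l.length).image (fun i => l.getD i vs)).card :=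
        (Finset.card_image_of_injOn hinj).symm
    _ ≤ (Sj G vs l j).card := Finset.card_le_card hsub

include hπ hmem hnd hsort in
/-- The minimal `π` value in `Sj j` is that of the `j`-th ancestor. -/
lemma pi_w_le_of_mem_Sj (hT : G.IsTree) {j : ℕ} {x : V} (hx : x ∈ Sj G vs l j)
    (hj : j < l.length) : π (l.getD j vs) ≤ π x := by
  obtain ⟨y, hy1, hy2, hy3, hymin⟩ := exists_path_min hT π x vs
  have hyanc : y ∈ anc G π vs := hy3
  have hyl : y ∈ l := (hmem y).mpr hyanc
  obtain ⟨iy, hiy, hiyeq⟩ := List.getElem_of_mem hyl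
  have hyeq : l.getD iy vs = y := by rw [List.getD_eq_getElem l vs hiy, hiyeq]
  have hjiy : j ≤ iy := by
    by_contra hc
    push_neg at hc
    rw [mem_Sj] at hx
    exact hx iy hc (by rw [hyeq]; exact hy1)
  have h1 : π (l.getD j vs) ≤ π (l.getD iy vs) := by
    rcases Nat.lt_or_ge j iy with h | h
    · exact le_of_lt (w_strict hπ hnd hsort h hiy)
    · have : j = iy := by omega
      rw [this]
  have h2 : π y ≤ π x := hymin x (onPath_left x vs)
  rw [hyeq] at h1
  omega

end SortedList
end Part7

section Part8
variable {V : Type} [Fintype V] {G : SimpleGraph V}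

set_option linter.unusedSectionVars false
open scoped Classical

variable {π : V → ℕ} {vs : V} {l : List V}
variable (hπ : Function.Injective π)
  (hmem : ∀ x, x ∈ l ↔ x ∈ anc G π vs)
  (hnd : l.Nodup)
  (hsort : l.Pairwise (fun a b => π a ≤ π b))

lemma Sj_pclosed (hT : G.IsTree) {j : ℕ} : pclosed G (Sj G vs l j) := by
  intro x hx y hy z hz
  rw [mem_Sj] at hx hy ⊢
  intro i hi hcon
  rcases onPath_union hT (t := x) hcon with h | h
  · have hxy : onPath G x y (l.getD i vs) := onPath_trans hT hz (onPath_comm.mp h)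
    rcases onPath_union hT (t := vs) hxy with h2 | h2
    · exact hx i hi h2
    · exact hy i hi (onPath_comm.mp h2)
  · exact hx i hi h

include hπ hmem hnd hsort in
lemma w_anc_of_mem_Sj (hT : G.IsTree) {j i : ℕ} {x : V} (hx : x ∈ Sj G vs l j)
    (hij : i < j) (hjk : j ≤ l.length) : l.getD i vs ∈ anc G π x := by
  intro z hz
  have hwi_anc : l.getD i vs ∈ anc G π vs := w_mem_anc hmem (by omega)
  obtain ⟨m, hm1, hm2, hm3⟩ := median hT (l.getD i vs) x vs
  rcases onPath_split hT hm1 hz with h | h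
  · exact anc_le hwi_anc (onPath_trans hT hm2 h)
  · have hz2 : onPath G x vs z := onPath_trans hT hm3 (onPath_comm.mp h)
    by_contra hc
    push_neg at hc
    obtain ⟨y, hy1, _, hy3, hymin⟩ := exists_path_min hT π z vs
    have hyl : y ∈ l := (hmem y).mpr hy3
    obtain ⟨iy, hiy, hiyeq⟩ := List.getElem_of_mem hyl
    have hyeq : l.getD iy vs = y := by rw [List.getD_eq_getElem l vs hiy, hiyeq]
    have hyz : π y ≤ π z := hymin z (onPath_left z vs)
    have hne : iy ≠ i := by
      rintro rfl
      rw [hyeq] at hc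
      omega
    have hile : iy ≤ i := by
      apply w_le_iff (π := π) (vs := vs) hπ hnd hsort hiy (by omega)
      rw [hyeq]
      omega
    have hxy : onPath G x vs y := onPath_trans' hT hz2 hy1
    rw [mem_Sj] at hx
    exact hx iy (by omega) (by rw [hyeq]; exact hxy)

include hπ hmem hnd hsort in
lemma anc_outside_Sj (hT : G.IsTree) {j : ℕ} {x u : V} (hx : x ∈ Sj G vs l j)
    (hu : u ∈ anc G π x) (huS : u ∉ Sj G vs l j) (hj : j ≤ l.length) :
    ∃ i < j, u = l.getD i vs := by
  rw [mem_Sj] at huS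
  push_neg at huS
  obtain ⟨i0, hi0, hup⟩ := huS
  obtain ⟨m, hm1, hm2, hm3⟩ := median hT u x vs
  have ha : onPath G u m (l.getD i0 vs) := by
    rcases onPath_split hT hm2 hup with h | h
    · exact h
    · exfalso
      have hcon : onPath G x vs (l.getD i0 vs) := onPath_trans' hT hm3 h
      rw [mem_Sj] at hx
      exact hx i0 hi0 hcon
  have hux : onPath G u x (l.getD i0 vs) := onPath_trans hT hm1 ha
  have hple : π u ≤ π (l.getD i0 vs) := anc_le hu hux
  have huanc : u ∈ anc G π vs := by
    intro z hz
    rcases onPath_split hT hm2 hz with h | h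
    · exact anc_le hu (onPath_trans hT hm1 h)
    · by_contra hc
      push_neg at hc
      have hz2 : onPath G x vs z := onPath_trans' hT hm3 h
      obtain ⟨y, hy1, _, hy3, hymin⟩ := exists_path_min hT π z vs
      have hyl : y ∈ l := (hmem y).mpr hy3
      obtain ⟨iy, hiy, hiyeq⟩ := List.getElem_of_mem hyl
      have hyeq : l.getD iy vs = y := by rw [List.getD_eq_getElem l vs hiy, hiyeq]
      have hyz : π y ≤ π z := hymin z (onPath_left z vs)
      have hne : iy ≠ i0 := by
        rintro rfl
        rw [hyeq] at hple
        omega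
      have hile : iy ≤ i0 := by
        apply w_le_iff (π := π) (vs := vs) hπ hnd hsort hiy (by omega)
        rw [hyeq]
        omega
      have hxy : onPath G x vs y := onPath_trans' hT hz2 hy1
      rw [mem_Sj] at hx
      exact hx iy (by omega) (by rw [hyeq]; exact hxy)
  have hul : u ∈ l := (hmem u).mpr huanc
  obtain ⟨iu, hiu, hiueq⟩ := List.getElem_of_mem hul
  have hueq : l.getD iu vs = u := by rw [List.getD_eq_getElem l vs hiu, hiueq]
  have hile : iu ≤ i0 := by
    apply w_le_iff (π := π) (vs := vs) hπ hnd hsort hiu (by omega)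
    rw [hueq]
    omega
  exact ⟨iu, by omega, hueq.symm⟩

include hπ hmem hnd hsort in
lemma mixed_hub (hT : G.IsTree) {j : ℕ} {x y : V} (hx : x ∈ Sj G vs l j)
    (hy : y ∉ Sj G vs l j) (hj : j < l.length) :
    ∃ u, u ∈ anc G π x ∧ u ∈ anc G π y ∧ onPath G x y u ∧ u ∉ Sj G vs l j := by
  rw [mem_Sj] at hy
  push_neg at hy
  obtain ⟨i0, hi0, hyp⟩ := hy
  obtain ⟨u, hu1, hu2, hu3, humin⟩ := exists_path_min hT π x y
  obtain ⟨m, hm1, hm2, hm3⟩ := median hT x y vs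
  have hwxy : onPath G x y (l.getD i0 vs) := by
    rcases onPath_split hT hm3 hyp with h | h
    · have : onPath G y x (l.getD i0 vs) :=
        onPath_trans hT (onPath_comm.mp hm1) h
      exact onPath_comm.mp this
    · exfalso
      have hcon : onPath G x vs (l.getD i0 vs) := onPath_trans' hT hm2 h
      rw [mem_Sj] at hx
      exact hx i0 hi0 hcon
  have hule : π u ≤ π (l.getD i0 vs) := humin _ hwxy
  refine ⟨u, hu2, hu3, hu1, ?_⟩
  intro huS
  have h1 : π (l.getD j vs) ≤ π u := pi_w_le_of_mem_Sj hπ hmem hnd hsort hT huS hj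
  have h2 : π (l.getD i0 vs) < π (l.getD j vs) := w_strict hπ hnd hsort hi0 hj
  omega

end Part8

section Part9
variable {V : Type} [Fintype V] {G : SimpleGraph V}

set_option linter.unusedSectionVars false
open scoped Classical

variable {π : V → ℕ} {vs : V} {l : List V}
variable (hπ : Function.Injective π)
  (hmem : ∀ x, x ∈ l ↔ x ∈ anc G π vs)
  (hnd : l.Nodup)
  (hsort : l.Pairwise (fun a b => π a ≤ π b))

include hπ hnd hsort in
lemma w_image_card {j : ℕ} (hj : j ≤ l.length) :
    ((Finset.range j).image (fun i => l.getD i vs)).card = j := by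
  rw [Finset.card_image_of_injOn, Finset.card_range]
  intro a ha b hb hab
  simp only at hab
  rw [Finset.coe_range, Set.mem_Iio] at ha hb
  by_contra hne
  rcases Nat.lt_or_ge a b with h | h
  · have := w_strict (π := π) (vs := vs) hπ hnd hsort h (by omega)
    rw [hab] at this; omega
  · have hba : b < a := by omega
    have := w_strict (π := π) (vs := vs) hπ hnd hsort hba (by omega)
    rw [hab] at this; omega

include hπ hmem hnd hsort in
lemma ncard_lower (hT : G.IsTree) {j : ℕ} (hj : j ≤ l.length) {x : V}
    (hx : x ∈ Sj G vs l j) {H : V → Set V} (hanc : ∀ v, H v = anc G π v) :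
    j + 1 ≤ (H x).ncard := by
  set W : Finset V := insert x ((Finset.range j).image (fun i => l.getD i vs)) with hW
  have hWsub : (↑W : Set V) ⊆ H x := by
    intro u hu
    rw [Finset.coe_insert, Set.mem_insert_iff] at hu
    rcases hu with rfl | hu
    · rw [hanc]; exact mem_anc_self π hT u
    · rw [Finset.mem_coe, Finset.mem_image] at hu
      obtain ⟨i, hi, rfl⟩ := hu
      rw [Finset.mem_range] at hi
      rw [hanc]
      exact w_anc_of_mem_Sj hπ hmem hnd hsort hT hx hi hj
  have hxW : x ∉ (Finset.range j).image (fun i => l.getD i vs) := by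
    intro hcon
    rw [Finset.mem_image] at hcon
    obtain ⟨i, hi, heq⟩ := hcon
    rw [Finset.mem_range] at hi
    rw [mem_Sj] at hx
    apply hx i hi
    rw [← heq]
    exact onPath_left _ _
  have hcard : W.card = j + 1 := by
    rw [hW, Finset.card_insert_of_notMem hxW, w_image_card hπ hnd hsort hj]
  calc j + 1 = W.card := hcard.symm
    _ = (↑W : Set V).ncard := (Set.ncard_coe_finset W).symm
    _ ≤ (H x).ncard := Set.ncard_le_ncard hWsub (Set.toFinite _)

include hπ hmem hnd hsort in
lemma ncard_upper_swap (hT : G.IsTree) {j : ℕ} (hj : j ≤ l.length) {x : V}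
    (hx : x ∈ Sj G vs l j) {H : V → Set V} (hanc : ∀ v, H v = anc G π v)
    {L : Finset V} :
    (H x \ (↑(Sj G vs l j) : Set V) ∪ (↑L : Set V)).ncard ≤ j + L.card := by
  have hsubW : H x \ (↑(Sj G vs l j) : Set V) ⊆
      (↑((Finset.range j).image (fun i => l.getD i vs)) : Set V) := by
    intro u hu
    obtain ⟨hu1, hu2⟩ := hu
    rw [hanc] at hu1
    obtain ⟨i, hi, rfl⟩ :=
      anc_outside_Sj hπ hmem hnd hsort hT hx hu1 (by simpa using hu2) hj
    rw [Finset.mem_coe, Finset.mem_image]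
    exact ⟨i, Finset.mem_range.mpr hi, rfl⟩
  calc (H x \ (↑(Sj G vs l j) : Set V) ∪ (↑L : Set V)).ncard
      ≤ (H x \ (↑(Sj G vs l j) : Set V)).ncard + (↑L : Set V).ncard :=
        Set.ncard_union_le _ _
    _ ≤ j + L.card := by
        have h1 : (H x \ (↑(Sj G vs l j) : Set V)).ncard ≤ j := by
          calc (H x \ (↑(Sj G vs l j) : Set V)).ncard
              ≤ (↑((Finset.range j).image (fun i => l.getD i vs)) : Set V).ncard :=
                Set.ncard_le_ncard hsubW (Set.toFinite _)
            _ = j := by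
                rw [Set.ncard_coe_finset, w_image_card hπ hnd hsort hj]
        rw [Set.ncard_coe_finset]
        omega

end Part9

section Part10
variable {V : Type} [Fintype V] {G : SimpleGraph V}

set_option linter.unusedSectionVars false
open scoped Classical

variable {π : V → ℕ} {vs : V} {l : List V}
variable (hπ : Function.Injective π)
  (hmem : ∀ x, x ∈ l ↔ x ∈ anc G π vs)
  (hnd : l.Nodup)
  (hsort : l.Pairwise (fun a b => π a ≤ π b))

include hπ hmem hnd hsort in
lemma halving (hT : G.IsTree) {H : V → Set V} (hH : IsHubLabeling G H)
    (hanc : ∀ v, H v = anc G π v) {p : ℝ} (hp : 1 < p)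
    (hopt : ∀ H' : V → Set V, IsHubLabeling G H' →
      ∑ u : V, ((H u).ncard : ℝ) ^ p ≤ ∑ u : V, ((H' u).ncard : ℝ) ^ p)
    {j K : ℕ} (hK : Nat.log 2 (Fintype.card V) + 1 ≤ K)
    (hjk : j + 2 * K ≤ l.length - 1) :
    2 * (Sj G vs l (j + 2 * K)).card ≤ (Sj G vs l j).card := by
  by_contra hcon
  push_neg at hcon
  have hlen1 : 0 < l.length := l_nonempty hπ hmem hnd hsort hT
  have hjk' : j + 2 * K < l.length := by omega
  have hS'S : Sj G vs l (j + 2 * K) ⊆ Sj G vs l j := Sj_anti (by omega)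
  have hvsS' : vs ∈ Sj G vs l (j + 2 * K) :=
    vs_mem_Sj hπ hmem hnd hsort hT (by omega)
  have hScard_pos : 0 < (Sj G vs l j).card := Finset.card_pos.mpr ⟨vs, hS'S hvsS'⟩
  obtain ⟨L, hL1, hL2, hL3⟩ :=
    centroid_labeling hT (Sj G vs l j).card (Sj G vs l j) le_rfl (Sj_pclosed hT)
  have hLK : ∀ x ∈ Sj G vs l j, (L x).card ≤ K := by
    intro x hx
    refine le_trans (hL2 x hx) ?_
    have h1 : Nat.log 2 (Sj G vs l j).card ≤ Nat.log 2 (Fintype.card V) :=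
      Nat.log_mono_right (Finset.card_le_univ _)
    omega
  -- the modified labeling
  have hH''hub : IsHubLabeling G (fun v =>
      if v ∈ Sj G vs l j then (H v \ (↑(Sj G vs l j) : Set V)) ∪ (↑(L v) : Set V)
      else H v) := by
    intro x y
    by_cases hxS : x ∈ Sj G vs l j
    · by_cases hyS : y ∈ Sj G vs l j
      · obtain ⟨u, hu1, hu2, hu3⟩ := hL3 x hxS y hyS
        refine ⟨u, ?_, ?_, hu3⟩
        · dsimp only; rw [if_pos hxS]; exact Or.inr (by exact_mod_cast hu1)
        · dsimp only; rw [if_pos hyS]; exact Or.inr (by exact_mod_cast hu2)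
      · obtain ⟨u, hu1, hu2, hu3, hu4⟩ :=
          mixed_hub hπ hmem hnd hsort hT hxS hyS (by omega)
        refine ⟨u, ?_, ?_, hu3⟩
        · dsimp only; rw [if_pos hxS]
          exact Or.inl ⟨by rw [hanc]; exact hu1, by simpa using hu4⟩
        · dsimp only; rw [if_neg hyS]
          rw [hanc]; exact hu2
    · by_cases hyS : y ∈ Sj G vs l j
      · obtain ⟨u, hu1, hu2, hu3, hu4⟩ :=
          mixed_hub hπ hmem hnd hsort hT hyS hxS (by omega)
        refine ⟨u, ?_, ?_, onPath_comm.mp hu3⟩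
        · dsimp only; rw [if_neg hxS]
          rw [hanc]; exact hu2
        · dsimp only; rw [if_pos hyS]
          exact Or.inl ⟨by rw [hanc]; exact hu1, by simpa using hu4⟩
      · obtain ⟨u, hu1, hu2, hu3⟩ := hH x y
        refine ⟨u, ?_, ?_, hu3⟩
        · dsimp only; rw [if_neg hxS]; exact hu1
        · dsimp only; rw [if_neg hyS]; exact hu2
  have hkey := hopt _ hH''hub
  -- restrict the sum to `Sj j`
  have hsum : ∑ v ∈ Sj G vs l j, ((H v).ncard : ℝ) ^ p ≤
      ∑ v ∈ Sj G vs l j,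
        (((H v \ (↑(Sj G vs l j) : Set V)) ∪ (↑(L v) : Set V)).ncard : ℝ) ^ p := by
    have h1 := Finset.sum_add_sum_compl (Sj G vs l j) (fun v => ((H v).ncard : ℝ) ^ p)
    have h2 := Finset.sum_add_sum_compl (Sj G vs l j) (fun v =>
      (((if v ∈ Sj G vs l j then (H v \ (↑(Sj G vs l j) : Set V)) ∪ (↑(L v) : Set V)
        else H v).ncard : ℝ)) ^ p)
    have h3 : ∑ v ∈ (Sj G vs l j)ᶜ, (((if v ∈ Sj G vs l j then
          (H v \ (↑(Sj G vs l j) : Set V)) ∪ (↑(L v) : Set V) else H v).ncard : ℝ)) ^ p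
        = ∑ v ∈ (Sj G vs l j)ᶜ, ((H v).ncard : ℝ) ^ p := by
      apply Finset.sum_congr rfl
      intro v hv
      rw [Finset.mem_compl] at hv
      rw [if_neg hv]
    have h4 : ∑ v ∈ Sj G vs l j, (((if v ∈ Sj G vs l j then
          (H v \ (↑(Sj G vs l j) : Set V)) ∪ (↑(L v) : Set V) else H v).ncard : ℝ)) ^ p
        = ∑ v ∈ Sj G vs l j,
          (((H v \ (↑(Sj G vs l j) : Set V)) ∪ (↑(L v) : Set V)).ncard : ℝ) ^ p := by
      apply Finset.sum_congr rfl
      intro v hv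
      rw [if_pos hv]
    have h5 := hkey
    rw [← h1, ← h2, h3, h4] at h5
    linarith
  -- upper bound for the swapped labels
  have hup : ∀ v ∈ Sj G vs l j,
      (((H v \ (↑(Sj G vs l j) : Set V)) ∪ (↑(L v) : Set V)).ncard : ℝ) ^ p
        ≤ (((j + K : ℕ) : ℝ)) ^ p := by
    intro v hv
    apply Real.rpow_le_rpow (by positivity) _ (by linarith)
    have h1 := ncard_upper_swap hπ hmem hnd hsort hT (j := j) (by omega) hv hanc
      (L := L v)
    have h2 := hLK v hv
    exact_mod_cast le_trans h1 (by omega)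
  have hupper : ∑ v ∈ Sj G vs l j, ((H v).ncard : ℝ) ^ p ≤
      ((Sj G vs l j).card : ℝ) * (((j + K : ℕ) : ℝ)) ^ p := by
    calc ∑ v ∈ Sj G vs l j, ((H v).ncard : ℝ) ^ p
        ≤ ∑ v ∈ Sj G vs l j,
            (((H v \ (↑(Sj G vs l j) : Set V)) ∪ (↑(L v) : Set V)).ncard : ℝ) ^ p := hsum
      _ ≤ ∑ v ∈ Sj G vs l j, (((j + K : ℕ) : ℝ)) ^ p := Finset.sum_le_sum hup
      _ = ((Sj G vs l j).card : ℝ) * (((j + K : ℕ) : ℝ)) ^ p := by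
          rw [Finset.sum_const, nsmul_eq_mul]
  -- lower bound
  have hlow : ((Sj G vs l (j + 2*K)).card : ℝ) * (((j + 2*K + 1 : ℕ) : ℝ)) ^ p
      + (((Sj G vs l j).card : ℝ) - ((Sj G vs l (j + 2*K)).card : ℝ))
        * (((j + 1 : ℕ) : ℝ)) ^ p
      ≤ ∑ v ∈ Sj G vs l j, ((H v).ncard : ℝ) ^ p := by
    rw [← Finset.sum_sdiff hS'S]
    have hl1 : ∀ v ∈ Sj G vs l j \ Sj G vs l (j + 2*K),
        (((j + 1 : ℕ) : ℝ)) ^ p ≤ ((H v).ncard : ℝ) ^ p := by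
      intro v hv
      rw [Finset.mem_sdiff] at hv
      apply Real.rpow_le_rpow (by positivity) _ (by linarith)
      exact_mod_cast ncard_lower hπ hmem hnd hsort hT (by omega) hv.1 hanc
    have hl2 : ∀ v ∈ Sj G vs l (j + 2*K),
        (((j + 2*K + 1 : ℕ) : ℝ)) ^ p ≤ ((H v).ncard : ℝ) ^ p := by
      intro v hv
      apply Real.rpow_le_rpow (by positivity) _ (by linarith)
      exact_mod_cast ncard_lower hπ hmem hnd hsort hT (by omega) hv hanc
    have hs1 : (((Sj G vs l j).card : ℝ) - ((Sj G vs l (j + 2*K)).card : ℝ))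
        * (((j + 1 : ℕ) : ℝ)) ^ p ≤
        ∑ v ∈ Sj G vs l j \ Sj G vs l (j + 2*K), ((H v).ncard : ℝ) ^ p := by
      have hc : ((Sj G vs l j \ Sj G vs l (j + 2*K)).card : ℝ)
          = ((Sj G vs l j).card : ℝ) - ((Sj G vs l (j + 2*K)).card : ℝ) := by
        rw [Finset.card_sdiff_of_subset hS'S]
        have := Finset.card_le_card hS'S
        push_cast [Nat.cast_sub this]
        ring
      calc (((Sj G vs l j).card : ℝ) - ((Sj G vs l (j + 2*K)).card : ℝ))
            * (((j + 1 : ℕ) : ℝ)) ^ p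
          = ((Sj G vs l j \ Sj G vs l (j + 2*K)).card : ℝ) * (((j + 1 : ℕ) : ℝ)) ^ p := by
            rw [hc]
        _ ≤ ∑ v ∈ Sj G vs l j \ Sj G vs l (j + 2*K), ((H v).ncard : ℝ) ^ p := by
            rw [← nsmul_eq_mul]
            exact Finset.card_nsmul_le_sum _ _ _ hl1
    have hs2 : ((Sj G vs l (j + 2*K)).card : ℝ) * (((j + 2*K + 1 : ℕ) : ℝ)) ^ p ≤
        ∑ v ∈ Sj G vs l (j + 2*K), ((H v).ncard : ℝ) ^ p := by
      rw [← nsmul_eq_mul]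
      exact Finset.card_nsmul_le_sum _ _ _ hl2
    linarith
  -- convexity and contradiction
  set a : ℝ := ((j + 2*K + 1 : ℕ) : ℝ) with ha
  set b : ℝ := ((j + 1 : ℕ) : ℝ) with hb
  set c0 : ℝ := ((j + K : ℕ) : ℝ) with hc0
  set s : ℝ := ((Sj G vs l j).card : ℝ) with hs
  set s' : ℝ := ((Sj G vs l (j + 2*K)).card : ℝ) with hs'
  have hab : (a + b) / 2 = ((j + K + 1 : ℕ) : ℝ) := by
    rw [ha, hb]; push_cast; ring
  have hmid : (((j + K + 1 : ℕ) : ℝ)) ^ p ≤ (a ^ p + b ^ p) / 2 := by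
    have hcvx := convexOn_rpow (le_of_lt hp)
    have h0a : a ∈ Set.Ici (0:ℝ) := by rw [Set.mem_Ici, ha]; positivity
    have h0b : b ∈ Set.Ici (0:ℝ) := by rw [Set.mem_Ici, hb]; positivity
    have := hcvx.2 h0a h0b (by norm_num : (0:ℝ) ≤ 1/2) (by norm_num : (0:ℝ) ≤ 1/2)
      (by norm_num)
    simp only [smul_eq_mul] at this
    rw [← hab]
    calc ((a + b)/2) ^ p = (1/2 * a + 1/2 * b) ^ p := by ring_nf
      _ ≤ 1/2 * a ^ p + 1/2 * b ^ p := this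
      _ = (a ^ p + b ^ p) / 2 := by ring
  have hineq : s' * a ^ p + (s - s') * b ^ p ≤ s * c0 ^ p := le_trans hlow hupper
  have hba : b ≤ a := by rw [ha, hb]; exact_mod_cast (by omega : j + 1 ≤ j + 2*K + 1)
  have hbp_le : b ^ p ≤ a ^ p := Real.rpow_le_rpow (by rw [hb]; positivity) hba (by linarith)
  have hs2 : s < 2 * s' := by rw [hs, hs']; exact_mod_cast hcon
  have hs'le : s' ≤ s := by rw [hs, hs']; exact_mod_cast Finset.card_le_card hS'S
  have hspos : 0 < s := by rw [hs]; exact_mod_cast hScard_pos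
  have hstrict : c0 ^ p < (((j + K + 1 : ℕ) : ℝ)) ^ p := by
    apply Real.rpow_lt_rpow (by rw [hc0]; positivity) _ (by linarith)
    rw [hc0]
    exact_mod_cast (by omega : j + K < j + K + 1)
  -- combine: s' a^p + (s - s') b^p ≥ (s/2)(a^p + b^p) ≥ s * mid^p > s * c0^p
  have hcomb : (s/2) * (a ^ p + b ^ p) ≤ s' * a ^ p + (s - s') * b ^ p := by
    nlinarith [mul_nonneg (by linarith : (0:ℝ) ≤ s' - s/2) (by linarith : (0:ℝ) ≤ a ^ p - b ^ p)]
  have hfinal : s * c0 ^ p < s * c0 ^ p := by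
    calc s * c0 ^ p < s * (((j + K + 1 : ℕ) : ℝ)) ^ p := by
          exact mul_lt_mul_of_pos_left hstrict hspos
      _ ≤ s * ((a ^ p + b ^ p) / 2) := by
          apply mul_le_mul_of_nonneg_left hmid (le_of_lt hspos)
      _ = (s/2) * (a ^ p + b ^ p) := by ring
      _ ≤ s' * a ^ p + (s - s') * b ^ p := hcomb
      _ ≤ s * c0 ^ p := hineq
  exact lt_irrefl _ hfinal

end Part10

section Part11
variable {V : Type} [Fintype V] {G : SimpleGraph V}

set_option linter.unusedSectionVars false
open scoped Classical

variable {π : V → ℕ} {vs : V} {l : List V}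
variable (hπ : Function.Injective π)
  (hmem : ∀ x, x ∈ l ↔ x ∈ anc G π vs)
  (hnd : l.Nodup)
  (hsort : l.Pairwise (fun a b => π a ≤ π b))

include hπ hmem hnd hsort in
lemma length_bound (hT : G.IsTree) {H : V → Set V} (hH : IsHubLabeling G H)
    (hanc : ∀ v, H v = anc G π v) {p : ℝ} (hp : 1 < p)
    (hopt : ∀ H' : V → Set V, IsHubLabeling G H' →
      ∑ u : V, ((H u).ncard : ℝ) ^ p ≤ ∑ u : V, ((H' u).ncard : ℝ) ^ p) :
    l.length ≤ 2 * (Nat.log 2 (Fintype.card V) + 1) ^ 2 + 1 := by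
  set K := Nat.log 2 (Fintype.card V) + 1 with hK
  have claim : ∀ t : ℕ, 2*K*t ≤ l.length - 1 →
      (Sj G vs l (2*K*t)).card * 2^t ≤ Fintype.card V := by
    intro t
    induction t with
    | zero =>
      intro _
      simpa using Finset.card_le_univ (Sj G vs l (2*K*0))
    | succ t ih =>
      intro hle
      have e1 : 2*K*t + 2*K = 2*K*(t+1) := by ring
      have hle' : 2*K*t ≤ l.length - 1 := by omega
      have hhalf := halving hπ hmem hnd hsort hT hH hanc hp hopt
        (j := 2*K*t) (K := K) le_rfl (by omega)
      have ih' := ih hle'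
      have e2 : (Sj G vs l (2*K*(t+1))).card * 2^(t+1)
          = (2 * (Sj G vs l (2*K*t + 2*K)).card) * 2^t := by
        rw [e1]; ring
      calc (Sj G vs l (2*K*(t+1))).card * 2^(t+1)
          = (2 * (Sj G vs l (2*K*t + 2*K)).card) * 2^t := e2
        _ ≤ (Sj G vs l (2*K*t)).card * 2^t := by
            exact Nat.mul_le_mul_right _ hhalf
        _ ≤ Fintype.card V := ih'
  by_contra hcon
  push_neg at hcon
  have hKK : 2*K*K ≤ l.length - 1 := by
    have : 2 * K ^ 2 + 1 < l.length := hcon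
    have e : K ^ 2 = K * K := sq K
    have e2 : 2 * K * K = 2 * (K * K) := by ring
    omega
  have h1 := claim K hKK
  have h2 : 1 ≤ (Sj G vs l (2*K*K)).card := by
    refine Finset.card_pos.mpr ⟨vs, ?_⟩
    exact vs_mem_Sj hπ hmem hnd hsort hT hKK
  have h3 : 2^K ≤ Fintype.card V := le_trans (Nat.le_mul_of_pos_left _ h2) h1
  have h4 : Fintype.card V < 2^K := by
    rw [hK]
    exact Nat.lt_pow_succ_log_self (by norm_num) _
  omega

end Part11

section Part12
variable {V : Type} [Fintype V] {G : SimpleGraph V}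

set_option linter.unusedSectionVars false
open scoped Classical

/-- Main structural bound: an optimal hierarchical hub labeling has labels of size
`O(log² n)`. -/
lemma key_bound (hT : G.IsTree) {π : V → ℕ} (hπ : Function.Injective π)
    {H : V → Set V} (hH : IsHubLabeling G H)
    (hh : ∀ u : V, ∀ w ∈ H u, π w ≤ π u) {p : ℝ} (hp : 1 < p)
    (hopt : ∀ H' : V → Set V, IsHubLabeling G H' →
      ∑ u : V, ((H u).ncard : ℝ) ^ p ≤ ∑ u : V, ((H' u).ncard : ℝ) ^ p) (vs : V) :
    (H vs).ncard ≤ 2 * (Nat.log 2 (Fintype.card V) + 1) ^ 2 + 1 := by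
  have hanc : ∀ v, H v = anc G π v :=
    label_eq_anc hT (by linarith : (0:ℝ) < p) hπ hH hh hopt
  letI : IsTrans V (fun a b => π a ≤ π b) := ⟨fun a b c hab hbc => le_trans hab hbc⟩
  letI : IsAntisymm V (fun a b => π a ≤ π b) :=
    ⟨fun a b hab hba => hπ (le_antisymm hab hba)⟩
  letI : IsTotal V (fun a b => π a ≤ π b) := ⟨fun a b => le_total _ _⟩
  set A : Finset V := (Set.toFinite (anc G π vs)).toFinset with hA
  set l : List V := A.sort (fun a b => π a ≤ π b) with hl
  have hmem : ∀ x, x ∈ l ↔ x ∈ anc G π vs := by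
    intro x
    rw [hl, Finset.mem_sort, hA, Set.Finite.mem_toFinset]
  have hnd : l.Nodup := Finset.sort_nodup _ _
  have hsort : l.Pairwise (fun a b => π a ≤ π b) := Finset.pairwise_sort _ _
  have hlen : l.length = (anc G π vs).ncard := by
    rw [hl, Finset.length_sort, hA]
    exact (Set.ncard_eq_toFinset_card _ _).symm
  have hbound := length_bound hπ hmem hnd hsort hT hH hanc hp hopt
  rw [hanc vs, ← hlen]
  exact hbound

end Part12

end HubProof

theorem lp_optimal_hierarchical_hub_sets_polylog (p : ℝ) (hp : 1 < p) :
    ∃ C : ℝ, 0 < C ∧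
      ∀ (V : Type) [Fintype V], ∀ G : SimpleGraph V, G.IsTree →
        2 ≤ Fintype.card V →
        ∀ H : V → Set V, IsHubLabeling G H → IsHierarchical H →
          (∀ H' : V → Set V, IsHubLabeling G H' →
            ∑ u : V, ((H u).ncard : ℝ) ^ p ≤ ∑ u : V, ((H' u).ncard : ℝ) ^ p) →
          ∀ u : V, ((H u).ncard : ℝ) ≤ C * (Real.log (Fintype.card V)) ^ 2 := by
  refine ⟨100, by norm_num, ?_⟩
  intro V _ G hT hcard H hH hhier hopt u
  obtain ⟨π, hπ, hh⟩ := hhier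
  have hkey := HubProof.key_bound hT hπ hH hh hp hopt u
  have hn2 : (2 : ℕ) ≤ Fintype.card V := hcard
  have hlog1 : 1 ≤ Nat.log 2 (Fintype.card V) := Nat.log_pos (by norm_num) hn2
  -- real versions
  set x : ℝ := (Nat.log 2 (Fintype.card V) : ℝ) with hx
  have hx1 : (1 : ℝ) ≤ x := by rw [hx]; exact_mod_cast hlog1
  set Lg : ℝ := Real.log (Fintype.card V) with hLg
  have hLg2 : Real.log 2 ≤ Lg := by
    rw [hLg]
    apply Real.log_le_log (by norm_num)
    exact_mod_cast hn2
  have hlog2 : (0.6931471803 : ℝ) < Real.log 2 := Real.log_two_gt_d9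
  have hLgpos : (0.6931471803 : ℝ) < Lg := lt_of_lt_of_le hlog2 hLg2
  have hxLg : x ≤ 2 * Lg := by
    have h1 : (2:ℕ) ^ (Nat.log 2 (Fintype.card V)) ≤ Fintype.card V :=
      Nat.pow_log_le_self 2 (by omega)
    have h2 : ((2:ℝ)) ^ (Nat.log 2 (Fintype.card V)) ≤ (Fintype.card V : ℝ) := by
      exact_mod_cast h1
    have h3 : Real.log ((2:ℝ) ^ (Nat.log 2 (Fintype.card V))) ≤ Lg := by
      rw [hLg]
      apply Real.log_le_log (by positivity)
      exact h2
    rw [Real.log_pow] at h3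
    -- x * log 2 ≤ Lg, log 2 > 0.69
    have h4 : x * Real.log 2 ≤ Lg := by rw [hx]; exact_mod_cast h3
    nlinarith [mul_le_mul_of_nonneg_left hlog2.le (by linarith : (0:ℝ) ≤ x)]
  have hcast : ((H u).ncard : ℝ) ≤ 2 * (x + 1) ^ 2 + 1 := by
    have : ((H u).ncard : ℝ) ≤ ((2 * (Nat.log 2 (Fintype.card V) + 1) ^ 2 + 1 : ℕ) : ℝ) := by
      exact_mod_cast hkey
    calc ((H u).ncard : ℝ) ≤ ((2 * (Nat.log 2 (Fintype.card V) + 1) ^ 2 + 1 : ℕ) : ℝ) := this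
      _ = 2 * (x + 1) ^ 2 + 1 := by push_cast; ring
  calc ((H u).ncard : ℝ) ≤ 2 * (x + 1) ^ 2 + 1 := hcast
    _ ≤ 100 * Lg ^ 2 := by nlinarith [sq_nonneg (x + 1), sq_nonneg Lg, sq_nonneg (x - 2*Lg)]
end

section
/- Let T be a finite tree on vertex set V with edge set E, and for a subset A ⊆ V define its boundary ∂(A) = {v ∈ V \ A : there exists u ∈ A with uv ∈ E}. If A and B are nonempty subsets of V, each inducing a connected subgraph of T, such that ∂(A) = ∂(B) = S and |S| ≥ 2, then A = B. -/
open SimpleGraph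

/-- The boundary of a set of vertices `A`: vertices outside `A` adjacent to some vertex of `A`. -/
def vertexBoundary {V : Type*} (G : SimpleGraph V) (A : Set V) : Set V :=
  {v : V | v ∉ A ∧ ∃ u ∈ A, G.Adj u v}

private lemma walk_in_set {V : Type*} (G : SimpleGraph V) (A : Set V)
    (hAc : (G.induce A).Connected) {a c : V} (ha : a ∈ A) (hc : c ∈ A) :
    ∃ w : G.Walk a c, ∀ v ∈ w.support, v ∈ A := by
  obtain ⟨q⟩ := hAc.preconnected ⟨a, ha⟩ ⟨c, hc⟩
  refine ⟨q.map (SimpleGraph.Embedding.induce A).toHom, ?_⟩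
  intro v hv
  have hv' : v ∈ (q.map (SimpleGraph.Embedding.induce A).toHom).support := hv
  rw [SimpleGraph.Walk.support_map, List.mem_map] at hv'
  obtain ⟨x, _, rfl⟩ := hv'
  exact x.2

private lemma crossing {V : Type*} {G : SimpleGraph V} {B : Set V} :
    ∀ {a c : V} (p : G.Walk a c), a ∉ B → c ∈ B →
      ∃ v ∈ p.support, v ∈ vertexBoundary G B := by
  intro a c p
  induction p with
  | nil => intro h hc; exact absurd hc h
  | @cons u x w h q ih =>
    intro ha hc
    by_cases hx : x ∈ B
    · exact ⟨u, by simp, ha, x, hx, h.symm⟩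
    · obtain ⟨v, hv, hvb⟩ := ih hx hc
      exact ⟨v, by simp [hv], hvb⟩

private lemma boundary_path {V : Type*} {G : SimpleGraph V} (hT : G.IsTree)
    {X : Set V} (hXc : (G.induce X).Connected)
    {s₁ s₂ : V} (hs₁ : s₁ ∈ vertexBoundary G X) (hs₂ : s₂ ∈ vertexBoundary G X)
    (P : G.Walk s₁ s₂) (hP : P.IsPath) :
    (∀ v ∈ P.support, v = s₁ ∨ v = s₂ ∨ v ∈ X) ∧ ¬ G.Adj s₁ s₂ := by
  classical
  obtain ⟨hs₁X, x₁, hx₁, hadj₁⟩ := hs₁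
  obtain ⟨hs₂X, x₂, hx₂, hadj₂⟩ := hs₂
  obtain ⟨w, hw⟩ := walk_in_set G X hXc hx₁ hx₂
  set W : G.Walk s₁ s₂ :=
    SimpleGraph.Walk.cons hadj₁.symm (w.append (SimpleGraph.Walk.cons hadj₂ SimpleGraph.Walk.nil))
    with hW
  have hWsupp : ∀ v ∈ W.support, v = s₁ ∨ v = s₂ ∨ v ∈ X := by
    intro v hv
    rw [hW] at hv
    simp only [SimpleGraph.Walk.support_cons, SimpleGraph.Walk.support_append,
      List.mem_cons, List.mem_append] at hv
    rcases hv with rfl | hv | hv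
    · exact Or.inl rfl
    · exact Or.inr (Or.inr (hw v hv))
    · simp only [SimpleGraph.Walk.support_cons, SimpleGraph.Walk.support_nil,
        List.tail_cons, List.mem_singleton] at hv
      exact Or.inr (Or.inl hv)
  have hPW : P = W.bypass := by
    have := hT.2.path_unique ⟨P, hP⟩ ⟨W.bypass, W.bypass_isPath⟩
    exact congrArg Subtype.val this
  constructor
  · intro v hv
    exact hWsupp v (W.support_bypass_subset (hPW ▸ hv))
  · intro hadj
    have hsing : (SimpleGraph.Path.singleton hadj : G.Path s₁ s₂).1 = W.bypass := by
      have := hT.2.path_unique (SimpleGraph.Path.singleton hadj) ⟨W.bypass, W.bypass_isPath⟩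
      exact congrArg Subtype.val this
    have hedge : s(s₁, s₂) ∈ W.edges := by
      apply W.edges_bypass_subset
      rw [← hsing]
      simp [SimpleGraph.Path.singleton]
    rw [hW] at hedge
    simp only [SimpleGraph.Walk.edges_cons, SimpleGraph.Walk.edges_append,
      List.mem_cons, List.mem_append] at hedge
    rcases hedge with h1 | h2 | h3
    · rw [Sym2.eq_iff] at h1
      rcases h1 with ⟨-, h⟩ | ⟨h, -⟩
      · exact hs₂X (by rw [h]; exact hx₁)
      · exact hs₁X (by rw [h]; exact hx₁)
    · exact hs₁X (hw _ (w.fst_mem_support_of_mem_edges h2))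
    · have h3' : s₁ = x₂ ∨ s₁ = s₂ := by
        simp only [SimpleGraph.Walk.edges_cons, SimpleGraph.Walk.edges_nil,
          List.mem_singleton, Sym2.eq_iff] at h3
        tauto
      rcases h3' with h | h
      · exact hs₁X (by rw [h]; exact hx₂)
      · exact hadj.ne h

private lemma middle_vertex {V : Type*} {G : SimpleGraph V} {s₁ s₂ : V}
    (P : G.Walk s₁ s₂) (hne : s₁ ≠ s₂) (hnadj : ¬ G.Adj s₁ s₂) :
    ∃ m ∈ P.support, m ≠ s₁ ∧ m ≠ s₂ := by
  cases P with
  | nil => exact absurd rfl hne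
  | @cons u m w h q =>
    refine ⟨m, by simp, fun he => G.irrefl (he ▸ h), ?_⟩
    rintro rfl
    exact hnadj h

private lemma subset_dir {V : Type*} {G : SimpleGraph V} {A B : Set V}
    (hAc : (G.induce A).Connected)
    (hbd : vertexBoundary G B = vertexBoundary G A)
    {x : V} (hxA : x ∈ A) (hxB : x ∈ B) : A ⊆ B := by
  intro a ha
  by_contra haB
  obtain ⟨w, hw⟩ := walk_in_set G A hAc ha hxA
  obtain ⟨v, hv, hvb⟩ := crossing w haB hxB
  rw [hbd] at hvb
  exact hvb.1 (hw v hv)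

theorem subtree_determined_by_boundary {V : Type*} [Fintype V]
    (G : SimpleGraph V) (hT : G.IsTree) (A B : Set V)
    (hA : A.Nonempty) (hB : B.Nonempty)
    (hAc : (G.induce A).Connected) (hBc : (G.induce B).Connected)
    (hbd : vertexBoundary G A = vertexBoundary G B)
    (hcard : 2 ≤ (vertexBoundary G A).ncard) :
    A = B := by
  classical
  obtain ⟨s₁, hs₁, s₂, hs₂, hne⟩ :=
    (Set.one_lt_ncard (Set.toFinite _)).mp hcard
  have hs₁B : s₁ ∈ vertexBoundary G B := hbd ▸ hs₁
  have hs₂B : s₂ ∈ vertexBoundary G B := hbd ▸ hs₂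
  -- the unique path from s₁ to s₂
  obtain ⟨w₀⟩ := hT.1.preconnected s₁ s₂
  set P := w₀.toPath.1 with hP
  have hPp : P.IsPath := w₀.toPath.2
  obtain ⟨hsuppA, hnadj⟩ := boundary_path hT hAc hs₁ hs₂ P hPp
  obtain ⟨hsuppB, -⟩ := boundary_path hT hBc hs₁B hs₂B P hPp
  -- extract a middle vertex
  obtain ⟨m, hm, hm1, hm2⟩ := middle_vertex P hne hnadj
  have hmA : m ∈ A := by
    rcases hsuppA m hm with h | h | h
    exacts [absurd h hm1, absurd h hm2, h]
  have hmB : m ∈ B := by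
    rcases hsuppB m hm with h | h | h
    exacts [absurd h hm1, absurd h hm2, h]
  exact le_antisymm (subset_dir hAc hbd.symm hmA hmB) (subset_dir hBc hbd hmB hmA)
end
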